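/- arXiv:1809.09906 — 7 statements merged into one kernel-verified Lean document; each statement's English description precedes it below -/
import Mathlib

section
/- Let K be a field of characteristic p > 0, let a ∈ K with a not in {x^p − x | x ∈ K}, let L = K[X]/(X^p − X − a) and let θ be the class of X in L. For k ∈ F_p set θ_k = 1/(θ − k). Then the family (θ_k)_{k ∈ F_p} is a K-basis of L, and the generator σ of Gal(L/K) determined by σ(θ) = θ + 1 satisfies σ(θ_k) = θ_{k−1} for every k ∈ F_p; in particular (θ_0, θ_1, …, θ_{p−1}) is a normal basis of L over K. -/
/-!
The translations `X ↦ X + c`, `c ∈ 𝔽_p`, fix `f = X ^ p - X - a`, so they permute its monic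
irreducible factors, and the stabilizer of a factor `g` is `0` or all of `𝔽_p`. In the first case
the `p` translates of `g` are pairwise coprime factors of `f`, so `deg g = 1` and `f` has a root
in `K`, which `a` excludes; in the second `g - g(0)` vanishes on `𝔽_p`, so `deg g ≥ p` and `g = f`.

A relation `∑ c k / (θ - k) = 0`, multiplied by `∏ (θ - j)`, becomes a polynomial relation of
degree `< p` for `θ`, hence is trivial as a polynomial; evaluating it at the node `k` leaves
`c k ∏_{j ≠ k} (k - j) = 0`. Finally `σ (θ - k) = θ - (k - 1)`.
-/

open Polynomial

namespace Polynomial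

section Translation

variable {R : Type*} [CommRing R]

def taylorStabilizer (g : R[X]) : AddSubgroup R where
  carrier := {r | taylor r g = g}
  zero_mem' := taylor_zero g
  add_mem' {r s} hr hs := by
    show taylor (r + s) g = g
    rw [← taylor_taylor, hs, hr]
  neg_mem' {r} hr := by
    calc taylor (-r) g = taylor (-r) (taylor r g) := by rw [hr]
      _ = g := by rw [taylor_taylor, neg_add_cancel, taylor_zero]

theorem mem_taylorStabilizer {g : R[X]} {r : R} : r ∈ taylorStabilizer g ↔ taylor r g = g :=
  Iff.rfl

theorem taylor_eq_taylor_iff {g : R[X]} {r s : R} :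
    taylor r g = taylor s g ↔ r - s ∈ taylorStabilizer g := by
  rw [mem_taylorStabilizer, ← (taylor_injective (-s)).eq_iff, taylor_taylor, taylor_taylor,
    neg_add_cancel, taylor_zero, neg_add_eq_sub]

theorem card_le_natDegree_of_forall_taylor_eq [IsDomain R] {ι : Type*} [Fintype ι] {v : ι → R}
    (hv : Function.Injective v) {g : R[X]} (hfix : ∀ i, taylor (v i) g = g)
    (hg : 0 < g.natDegree) : Fintype.card ι ≤ g.natDegree := by
  have hg0 : g - C (g.eval 0) ≠ 0 := fun h => by
    rw [← natDegree_sub_C (a := g.eval 0), h, natDegree_zero] at hg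
    exact hg.false
  rw [← natDegree_sub_C (a := g.eval 0), ← Finset.card_univ, ← Finset.card_map ⟨v, hv⟩]
  refine card_le_degree_of_subset_roots fun r hr => (mem_roots hg0).2 ?_
  obtain ⟨i, -, rfl⟩ := Finset.mem_map.1 hr
  rw [Function.Embedding.coeFn_mk, IsRoot, eval_sub, eval_C, sub_eq_zero, ← zero_add (v i),
    ← taylor_eval, hfix]

theorem card_mul_natDegree_le_of_taylor_dvd {K ι : Type*} [Field K] [Fintype ι] {v : ι → K}
    {f g : K[X]} (hf : f ≠ 0) (hg : Irreducible g) (hgm : g.Monic)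
    (hinj : Function.Injective fun i => taylor (v i) g) (hdvd : ∀ i, taylor (v i) g ∣ f) :
    Fintype.card ι * g.natDegree ≤ f.natDegree := by
  have hmonic (r : K) : (taylor r g).Monic := by rw [Monic, leadingCoeff_taylor, hgm]
  have hirr (r : K) : Irreducible (taylor r g) := (MulEquiv.irreducible_iff (taylorEquiv r)).2 hg
  have hcoprime : ((Finset.univ : Finset ι) : Set ι).Pairwise
      (Function.onFun IsCoprime fun i => taylor (v i) g) := by
    intro i _ j _ hij
    show IsCoprime (taylor (v i) g) (taylor (v j) g)
    rw [(hirr (v i)).coprime_iff_not_dvd]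
    intro hdvd'
    refine hij (hinj (eq_of_monic_of_dvd_of_natDegree_le (hmonic _) (hmonic _) hdvd' ?_).symm)
    rw [natDegree_taylor, natDegree_taylor]
  calc Fintype.card ι * g.natDegree = (∏ i, taylor (v i) g).natDegree := by
        simp [natDegree_prod_of_monic _ _ fun i _ => hmonic (v i), natDegree_taylor]
    _ ≤ f.natDegree := natDegree_le_of_dvd (Finset.prod_dvd_of_coprime hcoprime fun i _ => hdvd i) hf

end Translation

section ArtinSchreier

variable {K : Type*} [Field K]

theorem natDegree_X_pow_sub_X_sub_C {n : ℕ} (hn : 1 < n) (a : K) :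
    (X ^ n - X - C a : K[X]).natDegree = n := by
  rw [natDegree_sub_C, FiniteField.X_pow_card_sub_X_natDegree_eq K hn]

theorem monic_X_pow_sub_X_sub_C {n : ℕ} (hn : 1 < n) (a : K) : (X ^ n - X - C a : K[X]).Monic := by
  rw [sub_sub]
  refine monic_X_pow_sub ?_
  rw [degree_X_add_C]
  exact_mod_cast hn

variable {p : ℕ} [Fact p.Prime] [CharP K p]

theorem taylor_X_pow_sub_X_sub_C {c : K} (hc : c ^ p = c) (a : K) :
    taylor c (X ^ p - X - C a) = X ^ p - X - C a := by
  rw [map_sub, map_sub, taylor_X_pow, taylor_X, taylor_C, add_pow_char, ← C_pow, hc]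
  ring

theorem irreducible_X_pow_sub_X_sub_C {a : K} (ha : ¬ ∃ x : K, x ^ p - x = a) :
    Irreducible (X ^ p - X - C a : K[X]) := by
  set f : K[X] := X ^ p - X - C a
  have hp : 1 < p := (Fact.out : p.Prime).one_lt
  have hfdeg : f.natDegree = p := natDegree_X_pow_sub_X_sub_C hp a
  have hfm : f.Monic := monic_X_pow_sub_X_sub_C hp a
  obtain ⟨g, hgm, hgi, hgf⟩ := exists_monic_irreducible_factor f <|
    not_isUnit_of_natDegree_pos f (by omega)
  suffices p ≤ g.natDegree by
    rwa [eq_of_monic_of_dvd_of_natDegree_le hgm hfm hgf (hfdeg.trans_le this)]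
  let ι := ZMod.castHom (dvd_refl p) K
  have hfix (k : ZMod p) : taylor (ι k) f = f :=
    taylor_X_pow_sub_X_sub_C (by rw [← map_pow, ZMod.pow_card]) a
  have : Fact (Nat.card (ZMod p)).Prime := by rw [Nat.card_zmod]; infer_instance
  rcases ((taylorStabilizer g).comap ι.toAddMonoidHom).eq_bot_or_eq_top_of_prime_card
    with hbot | htop
  · exfalso
    have hinj : Function.Injective fun k => taylor (ι k) g := fun i j hij => by
      have : i - j ∈ (taylorStabilizer g).comap ι.toAddMonoidHom := by
        simpa [taylor_eq_taylor_iff] using hij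
      rwa [hbot, AddSubgroup.mem_bot, sub_eq_zero] at this
    have hdeg := card_mul_natDegree_le_of_taylor_dvd hfm.ne_zero hgi hgm hinj
      fun k => by rw [← hfix k]; exact _root_.map_dvd (taylorAlgHom (ι k)) hgf
    rw [ZMod.card, hfdeg] at hdeg
    have hg1 : g.degree = 1 := by
      have := hgi.natDegree_pos
      rw [degree_eq_natDegree hgm.ne_zero]
      norm_cast
      nlinarith
    obtain ⟨x, hx⟩ := exists_root_of_degree_eq_one hg1
    exact ha ⟨x, by simpa [f, sub_eq_zero] using hx.dvd hgf⟩
  · exact ZMod.card p ▸ card_le_natDegree_of_forall_taylor_eq (ZMod.castHom_injective K)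
      (fun k => AddSubgroup.mem_comap.1 (htop ▸ AddSubgroup.mem_top k)) hgi.natDegree_pos

end ArtinSchreier

end Polynomial

open Finset in
theorem linearIndependent_inv_sub_algebraMap {K L ι : Type*} [Field K] [Field L] [Algebra K L]
    [Fintype ι] {x : ι → K} (hx : Function.Injective x) {θ : L}
    (hθ : ∀ i, θ ≠ algebraMap K L (x i)) (hdeg : Fintype.card ι ≤ (minpoly K θ).natDegree) :
    LinearIndependent K fun i => (θ - algebraMap K L (x i))⁻¹ := by
  classical
  rw [Fintype.linearIndependent_iff]
  intro c hc k
  let P : K[X] := ∑ i, C (c i) * Lagrange.nodal (univ.erase i) x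
  have hnodal (i : ι) : aeval θ (Lagrange.nodal (univ.erase i) x) =
      aeval θ (Lagrange.nodal univ x) * (θ - algebraMap K L (x i))⁻¹ := by
    rw [Lagrange.nodal_eq_mul_nodal_erase (mem_univ i), map_mul, map_sub, aeval_X, aeval_C,
      mul_comm, inv_mul_cancel_left₀ (sub_ne_zero.2 (hθ i))]
  have hPθ : aeval θ P = 0 := by
    simp only [P, map_sum, map_mul, aeval_C, hnodal, mul_left_comm _ (aeval θ _), ← mul_sum,
      ← Algebra.smul_def, hc, mul_zero]
  have hPdeg : P.natDegree < (minpoly K θ).natDegree := by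
    have hle : P.natDegree ≤ Fintype.card ι - 1 :=
      natDegree_sum_le_of_forall_le _ _ fun i _ => (natDegree_C_mul_le _ _).trans_eq <| by
        rw [Lagrange.natDegree_nodal, card_erase_of_mem (mem_univ i), card_univ]
    have := Fintype.card_pos_iff.2 ⟨k⟩
    omega
  have hP : P = 0 := by
    by_contra hP
    exact (natDegree_le_natDegree (minpoly.degree_le_of_ne_zero K θ hP hPθ)).not_gt hPdeg
  have hPk := congrArg (eval (x k)) hP
  rw [eval_zero, eval_finsetSum, sum_eq_single k, eval_mul, eval_C] at hPk
  · exact (mul_eq_zero.1 hPk).resolve_right <| Lagrange.eval_nodal_not_at_node fun j hj =>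
      hx.ne (ne_of_mem_erase hj).symm
  · intro i _ hik
    rw [eval_mul, Lagrange.eval_nodal_at_node (mem_erase.2 ⟨hik.symm, mem_univ k⟩), mul_zero]
  · simp

/-- For an Artin–Schreier extension `L = K[X]/(X^p - X - a)` with `θ` the class of `X`,
the family `θ_k = 1/(θ - k)` for `k ∈ F_p` is a `K`-basis of `L`, and the generator `σ`
of `Gal(L/K)` with `σ(θ) = θ + 1` satisfies `σ(θ_k) = θ_{k-1}`: it is a normal basis. -/
theorem stmt_1 (K : Type*) [Field K] (p : ℕ) [Fact p.Prime] [CharP K p]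
    (a : K) (ha : ¬ ∃ x : K, x ^ p - x = a) :
    ∃ hirr : Irreducible (X ^ p - X - C a : K[X]),
      letI : Fact (Irreducible (X ^ p - X - C a : K[X])) := ⟨hirr⟩
      ∀ Θ : ZMod p → AdjoinRoot (X ^ p - X - C a : K[X]),
        (∀ k : ZMod p, Θ k =
          (AdjoinRoot.root (X ^ p - X - C a : K[X]) -
            algebraMap K (AdjoinRoot (X ^ p - X - C a : K[X]))
              (ZMod.castHom (dvd_refl p) K k))⁻¹) →
        (∃ B : Module.Basis (ZMod p) K (AdjoinRoot (X ^ p - X - C a : K[X])),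
          ∀ k : ZMod p, B k = Θ k) ∧
        ∀ σ : AdjoinRoot (X ^ p - X - C a : K[X]) ≃ₐ[K]
            AdjoinRoot (X ^ p - X - C a : K[X]),
          σ (AdjoinRoot.root (X ^ p - X - C a : K[X])) =
              AdjoinRoot.root (X ^ p - X - C a : K[X]) + 1 →
          ∀ k : ZMod p, σ (Θ k) = Θ (k - 1) := by
  have hirr := irreducible_X_pow_sub_X_sub_C ha
  refine ⟨hirr, fun Θ hΘ => ?_⟩
  obtain rfl := funext hΘ
  have : Fact (Irreducible (X ^ p - X - C a : K[X])) := ⟨hirr⟩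
  let pb := AdjoinRoot.powerBasis hirr.ne_zero
  have hdim : pb.dim = p := natDegree_X_pow_sub_X_sub_C (Fact.out : p.Prime).one_lt a
  have hminpoly : (minpoly K (AdjoinRoot.root (X ^ p - X - C a))).natDegree = p := by
    rw [← AdjoinRoot.powerBasis_gen hirr.ne_zero, pb.natDegree_minpoly, hdim]
  have hθ (k : ZMod p) : AdjoinRoot.root (X ^ p - X - C a) ≠
      algebraMap K _ (ZMod.castHom (dvd_refl p) K k) := fun h => by
    have := minpoly.natDegree_eq_one_iff.2 ⟨_, h.symm⟩
    have := (Fact.out : p.Prime).one_lt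
    omega
  have hli := linearIndependent_inv_sub_algebraMap (ZMod.castHom_injective K) hθ
    (by rw [ZMod.card]; exact hminpoly.ge)
  refine ⟨⟨basisOfLinearIndependentOfCardEqFinrank hli (by rw [ZMod.card, pb.finrank, hdim]),
    fun k => by simp⟩, fun σ hσ k => ?_⟩
  dsimp only
  rw [map_inv₀, map_sub, hσ, AlgEquiv.commutes, map_sub, map_one, map_sub, map_one]
  ring
end

section
/- Let K be a field of characteristic p > 0 and let R ∈ K be an element not lying in the prime field F_p ⊂ K. Then the element Σ_{k ∈ Z/pZ} (R + k)^{−1} · e_k of the group algebra K[Z/pZ] (where e_k denotes the basis element indexed by k) is a unit; equivalently, the vector ((R + k)^{−1})_{k ∈ Z/pZ} is invertible for the convolution product on K^{Z/pZ}. -/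
/-!
In characteristic `p` the Frobenius `x ↦ x ^ p` is additive on the commutative algebra
`K[ℤ/pℤ]`, and it sends `e_k` to `e_{p•k} = e_0`; hence `(∑ a_k e_k) ^ p = (∑ a_k) ^ p • e_0`,
and the element is a unit as soon as `∑ a_k ≠ 0`. For `a_k = (R + k)⁻¹` this sum is the
logarithmic derivative of `∏ k, (X + k) = X ^ p - X` at `R`, namely `-(R ^ p - R)⁻¹`.
-/

open Polynomial Finset

theorem FiniteField.prod_X_sub_C_eq_X_pow_card_sub_X (F : Type*) [Field F] [Fintype F] :
    ∏ a : F, (X - C a) = X ^ Fintype.card F - X := by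
  have hmonic : (X ^ Fintype.card F - X : F[X]).Monic :=
    (monic_X_pow _).sub_of_left <| by
      rw [degree_X_pow, degree_X]
      exact_mod_cast Fintype.one_lt_card
  have hroots := FiniteField.roots_X_pow_card_sub_X F
  have hcard : Multiset.card (X ^ Fintype.card F - X : F[X]).roots
      = (X ^ Fintype.card F - X : F[X]).natDegree := by
    rw [hroots, FiniteField.X_pow_card_sub_X_natDegree_eq F Fintype.one_lt_card]
    rfl
  simpa [hroots] using prod_multiset_X_sub_C_of_monic_of_roots_card_eq hmonic hcard

theorem Polynomial.sum_inv_sub_eq_eval_derivative_div {ι K : Type*} [Field K]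
    (s : Finset ι) (f : ι → K) {x : K} (hx : ∀ i ∈ s, x - f i ≠ 0) :
    ∑ i ∈ s, (x - f i)⁻¹
      = (derivative (∏ i ∈ s, (X - C (f i)))).eval x / ∏ i ∈ s, (x - f i) := by
  classical
  simp only [derivative_prod_finset, derivative_sub, derivative_X, derivative_C, sub_zero,
    mul_one, eval_finsetSum, eval_prod, eval_sub, eval_X, eval_C, sum_div]
  refine sum_congr rfl fun i hi => ?_
  have hrest : ∏ j ∈ s.erase i, (x - f j) ≠ 0 :=
    prod_ne_zero_iff.2 fun j hj => hx j (mem_of_mem_erase hj)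
  rw [← mul_prod_erase s _ hi, div_mul_cancel_right₀ hrest]

namespace ZMod

variable {K : Type*} {p : ℕ}

variable (K p) in
theorem prod_X_sub_C_castHom [CommRing K] [Fact p.Prime] [CharP K p] :
    ∏ k : ZMod p, (X - C (castHom (dvd_refl p) K k)) = X ^ p - X := by
  simpa [Polynomial.map_prod] using
    congrArg (map (castHom (dvd_refl p) K)) (FiniteField.prod_X_sub_C_eq_X_pow_card_sub_X (ZMod p))

theorem prod_sub_castHom [CommRing K] [Fact p.Prime] [CharP K p] (x : K) :
    ∏ k : ZMod p, (x - castHom (dvd_refl p) K k) = x ^ p - x := by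
  simpa only [eval_prod, eval_sub, eval_X, eval_C, eval_pow] using
    congrArg (eval x) (prod_X_sub_C_castHom K p)

theorem add_castHom_ne_zero [CommRing K] [NeZero p] [CharP K p] {x : K}
    (hx : x ∉ Set.range (Nat.cast : ℕ → K)) (k : ZMod p) : x + castHom (dvd_refl p) K k ≠ 0 := by
  intro h
  refine hx ⟨(-k).val, ?_⟩
  rw [← map_natCast (castHom (dvd_refl p) K), natCast_zmod_val, map_neg,
    eq_neg_of_add_eq_zero_left h]

theorem pow_char_sub_self_ne_zero [CommRing K] [IsDomain K] [Fact p.Prime] [CharP K p] {x : K}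
    (hx : x ∉ Set.range (Nat.cast : ℕ → K)) : x ^ p - x ≠ 0 := by
  rw [← prod_sub_castHom]
  exact prod_ne_zero_iff.2 fun k _ => by
    simpa [sub_eq_add_neg] using add_castHom_ne_zero hx (-k)

theorem sum_inv_add_castHom [Field K] [Fact p.Prime] [CharP K p] {x : K}
    (hx : x ∉ Set.range (Nat.cast : ℕ → K)) :
    ∑ k : ZMod p, (x + castHom (dvd_refl p) K k)⁻¹ = -(x ^ p - x)⁻¹ := by
  have hx' : ∀ k ∈ univ, x - castHom (dvd_refl p) K k ≠ 0 := fun k _ => by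
    simpa [sub_eq_add_neg] using add_castHom_ne_zero hx (-k)
  calc ∑ k : ZMod p, (x + castHom (dvd_refl p) K k)⁻¹
        = ∑ k : ZMod p, (x - castHom (dvd_refl p) K k)⁻¹ :=
          Fintype.sum_equiv (Equiv.neg _) _ _ fun k => by simp [sub_eq_add_neg]
    _ = -(x ^ p - x)⁻¹ := by
          rw [sum_inv_sub_eq_eval_derivative_div _ _ hx', prod_X_sub_C_castHom, prod_sub_castHom]
          simp [derivative_X_pow, neg_div]

end ZMod

namespace AddMonoidAlgebra

instance charP {k G : Type*} [Semiring k] [AddMonoid G] (p : ℕ) [CharP k p] :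
    CharP (AddMonoidAlgebra k G) p :=
  charP_of_injective_ringHom (f := singleZeroRingHom) single_right_injective p

theorem sum_single_pow_char {k G : Type*} [CommSemiring k] [AddCommMonoid G]
    (p : ℕ) [Fact p.Prime] [CharP k p] (hG : ∀ g : G, p • g = 0) (s : Finset G) (f : G → k) :
    (∑ g ∈ s, single g (f g)) ^ p = single 0 (∑ g ∈ s, f g ^ p) := by
  simp only [sum_pow_char, single_pow, hG]
  exact (map_sum (singleAddHom 0) _ _).symm

end AddMonoidAlgebra

/-- If `K` has characteristic `p > 0` and `R ∈ K` does not lie in the prime field `F_p`,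
then `Σ_{k ∈ Z/pZ} (R + k)⁻¹ · e_k` is a unit of the group algebra `K[Z/pZ]`, i.e. the
vector `((R + k)⁻¹)_k` is invertible for the convolution product. -/
theorem stmt_3 (K : Type*) [Field K] (p : ℕ) [Fact p.Prime] [CharP K p]
    (R : K) (hR : R ∉ Set.range (Nat.cast : ℕ → K)) :
    IsUnit ((∑ k : ZMod p,
        AddMonoidAlgebra.single k ((R + ZMod.castHom (dvd_refl p) K k)⁻¹)) :
      AddMonoidAlgebra K (ZMod p)) := by
  set a := fun k : ZMod p => (R + ZMod.castHom (dvd_refl p) K k)⁻¹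
  have hsum : ∑ k, a k ≠ 0 := by
    rw [ZMod.sum_inv_add_castHom hR]
    exact neg_ne_zero.2 (inv_ne_zero (ZMod.pow_char_sub_self_ne_zero hR))
  have hpow : (∑ k, AddMonoidAlgebra.single k (a k)) ^ p
      = AddMonoidAlgebra.single 0 ((∑ k, a k) ^ p) := by
    rw [AddMonoidAlgebra.sum_single_pow_char p (by simp), sum_pow_char]
  refine (isUnit_pow_iff (Fact.out : p.Prime).ne_zero).1 ?_
  rw [hpow]
  exact (pow_ne_zero p hsum).isUnit.map AddMonoidAlgebra.singleZeroRingHom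
end

section
/- Let K be a field of characteristic p > 0 containing a primitive mn-th root of unity ζ_{mn} with m, n ≥ 2 and mn prime to p; set ζ = (ζ_{mn})^m. Let a ∈ K* have class of order n in K*/(K*)^n, let L = K[X]/(X^n − a), let θ be the class of X, and for 0 ≤ k ≤ n − 1 set θ_k = 1/(ζ^{−k}θ − 1). Then (θ_0, θ_1, …, θ_{n−1}) is a K-basis of L, and the generator σ of Gal(L/K) determined by σ(θ) = ζθ satisfies σ(θ_k) = θ_{k−1} (indices mod n); in particular this is a normal basis of L over K. -/
open Polynomial Finset

/-!
An irreducible factor `g` of `X ^ n - a` gives an element, the norm of a root of `g`, whose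
`n`-th power is `a ^ deg g`; hence `deg g = n`.

Writing `ω = ζ ^ m` and `x = ω⁻ᵏ θ`, we have `x ^ n = a`, so `θ_k = 1 / (x - 1)` is the geometric
series `(a - 1)⁻¹ ∑_{i<n} ω^{-ki} θ^i`: the `θ_k` are the discrete Fourier transform of the power
basis. Orthogonality of the characters of `ZMod n` inverts it, `θ ^ j = (a - 1)/n ∑_k ω^{kj} θ_k`
(`n` is invertible in `K` because `K` contains a primitive `n`-th root of unity), so the `θ_k`
span `L` and, being `n = [L : K]` of them, form a basis. Finally `σ (ω⁻ᵏ θ) = ω^{-(k-1)} θ`.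
-/

theorem inv_sub_one_eq_geom_sum {L : Type*} [Field L] {x c : L} {n : ℕ} (hx : x ^ n = c)
    (hc : c ≠ 1) : (x - 1)⁻¹ = (c - 1)⁻¹ * ∑ i ∈ range n, x ^ i :=
  inv_eq_of_mul_eq_one_right <| by
    rw [mul_left_comm, mul_geom_sum, hx, inv_mul_cancel₀ (sub_ne_zero.mpr hc)]

namespace IsPrimitiveRoot

variable {K : Type*} [Field K] {n : ℕ} {ω : K}

theorem geom_sum_pow_div_pow (hω : IsPrimitiveRoot ω n) {i j : ℕ} (hi : i < n) (hj : j < n) :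
    ∑ t ∈ range n, (ω ^ i / ω ^ j) ^ t = if i = j then (n : K) else 0 := by
  have hωj : ω ^ j ≠ 0 := pow_ne_zero j (hω.ne_zero (by omega))
  split_ifs with hij
  · simp [hij, div_self hωj]
  · have hne : ω ^ i / ω ^ j - 1 ≠ 0 :=
      sub_ne_zero.mpr fun h => hij (hω.pow_inj hi hj ((div_eq_one_iff_eq hωj).mp h))
    have hpow : (ω ^ i / ω ^ j) ^ n = 1 := by
      rw [div_pow, ← pow_mul, ← pow_mul, pow_mul', pow_mul', hω.pow_eq_one, one_pow, one_pow,
        div_one]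
    exact (mul_eq_zero.mp ((mul_geom_sum _ n).trans (by rw [hpow, sub_self]))).resolve_left hne

end IsPrimitiveRoot

theorem pow_val_sub_one_mul {M : Type*} [Monoid M] {n : ℕ} [NeZero n] {μ : M} (hμ : μ ^ n = 1)
    (k : ZMod n) : μ ^ (k - 1).val * μ = μ ^ k.val := by
  rw [← pow_succ, ← pow_mod_orderOf, ← pow_mod_orderOf μ k.val]
  refine congrArg _ (Nat.ModEq.of_dvd (orderOf_dvd_of_pow_eq_one hμ) ?_)
  rw [← ZMod.natCast_eq_natCast_iff]
  simp

theorem X_pow_sub_C_irreducible_of_forall_lt_not_pow {K : Type*} [Field K] {n : ℕ} (hn : n ≠ 0)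
    {a : K} (ha : ∀ r : ℕ, 0 < r → r < n → ¬ ∃ x : K, x ^ n = a ^ r) :
    Irreducible (X ^ n - C a : K[X]) := by
  have hf : (X ^ n - C a : K[X]) ≠ 0 := X_pow_sub_C_ne_zero (Nat.pos_of_ne_zero hn) a
  have hu : ¬ IsUnit (X ^ n - C a : K[X]) := by
    rwa [Polynomial.isUnit_iff_degree_eq_zero, degree_X_pow_sub_C (Nat.pos_of_ne_zero hn),
      Nat.cast_eq_zero]
  obtain ⟨g, hg, hgf⟩ := WfDvdMonoid.exists_irreducible_factor hu hf
  have hdn : g.natDegree ≤ n :=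
    (natDegree_le_of_dvd hgf hf).trans_eq natDegree_X_pow_sub_C
  suffices hd : g.natDegree = n from
    (associated_of_dvd_of_natDegree_le hgf hf (by rw [natDegree_X_pow_sub_C, hd])).irreducible hg
  have : Fact (Irreducible g) := ⟨hg⟩
  have hnorm : Algebra.norm K (AdjoinRoot.root g) ^ n = a ^ g.natDegree := by
    have hroot : AdjoinRoot.root g ^ n = algebraMap K _ a := by
      have := eval₂_eq_zero_of_dvd_of_eval₂_eq_zero _ _ hgf (AdjoinRoot.eval₂_root g)
      rwa [eval₂_sub, eval₂_pow, eval₂_C, eval₂_X, sub_eq_zero] at this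
    rw [← map_pow, hroot, Algebra.norm_algebraMap, (AdjoinRoot.powerBasis hg.ne_zero).finrank,
      AdjoinRoot.powerBasis_dim]
  refine hdn.eq_or_lt.resolve_right fun hlt => ha g.natDegree ?_ hlt ⟨_, hnorm⟩
  exact natDegree_pos_iff_degree_pos.mpr (degree_pos_of_irreducible hg)

section KummerNormalBasis

variable {K L : Type*} [Field K] [Field L] [Algebra K L] {n : ℕ} {a : K} {θ : L}

theorem inv_algebraMap_mul_sub_one_eq_sum {ω : K} (hω : ω ^ n = 1) (ha : a ≠ 1)
    (hθ : θ ^ n = algebraMap K L a) (t : ℕ) :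
    (algebraMap K L (ω ^ t) * θ - 1)⁻¹ =
      ∑ i ∈ range n, ((a - 1)⁻¹ * (ω ^ t) ^ i) • θ ^ i := by
  have hpow : (algebraMap K L (ω ^ t) * θ) ^ n = algebraMap K L a := by
    rw [mul_pow, hθ, ← map_pow, ← pow_mul, pow_mul', hω, one_pow, map_one, one_mul]
  rw [inv_sub_one_eq_geom_sum hpow ((FaithfulSMul.algebraMap_eq_one_iff K L).not.mpr ha),
    ← map_one (algebraMap K L), ← map_sub, ← map_inv₀, mul_sum]
  refine sum_congr rfl fun i _ => ?_
  rw [mul_pow, ← map_pow, ← mul_assoc, ← map_mul, Algebra.smul_def]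

theorem pow_eq_sum_inv_algebraMap_mul_sub_one {ω : K} (hω : IsPrimitiveRoot ω n) (ha : a ≠ 1)
    (hθ : θ ^ n = algebraMap K L a) {j : ℕ} (hj : j < n) :
    θ ^ j = ∑ t ∈ range n,
      ((a - 1) * (n : K)⁻¹ * ((ω ^ t)⁻¹) ^ j) • (algebraMap K L (ω ^ t) * θ - 1)⁻¹ := by
  have : NeZero n := ⟨by omega⟩
  have hn : (n : K) ≠ 0 := hω.neZero'.ne
  have hcoef : ∀ t i, (a - 1) * (n : K)⁻¹ * ((ω ^ t)⁻¹) ^ j * ((a - 1)⁻¹ * (ω ^ t) ^ i) =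
      (n : K)⁻¹ * (ω ^ i / ω ^ j) ^ t := by
    intro t i
    rw [div_pow, ← pow_mul, ← pow_mul, inv_pow, ← pow_mul, ← pow_mul]
    field_simp
    ring
  calc θ ^ j = ∑ i ∈ range n, ((n : K)⁻¹ * if i = j then (n : K) else 0) • θ ^ i := by
        rw [sum_eq_single j (fun i _ hij => by rw [if_neg hij, mul_zero, zero_smul])
          (fun h => absurd (mem_range.mpr hj) h), if_pos rfl, inv_mul_cancel₀ hn, one_smul]
    _ = ∑ i ∈ range n, ∑ t ∈ range n, ((n : K)⁻¹ * (ω ^ i / ω ^ j) ^ t) • θ ^ i := by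
        refine sum_congr rfl fun i hi => ?_
        rw [← sum_smul, ← mul_sum, hω.geom_sum_pow_div_pow (mem_range.mp hi) hj]
    _ = _ := by
        simp_rw [inv_algebraMap_mul_sub_one_eq_sum hω.pow_eq_one ha hθ, smul_sum, smul_smul, hcoef]
        exact sum_comm

theorem exists_basis_inv_algebraMap_mul_sub_one [NeZero n] {ω : K} (hω : IsPrimitiveRoot ω n)
    (ha : a ≠ 1) (pb : PowerBasis K L) (hdim : pb.dim = n)
    (hθ : pb.gen ^ n = algebraMap K L a) :
    ∃ B : Module.Basis (ZMod n) K L,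
      ∀ k : ZMod n, B k = (algebraMap K L (ω ^ k.val) * pb.gen - 1)⁻¹ := by
  set Θ : ZMod n → L := fun k => (algebraMap K L (ω ^ k.val) * pb.gen - 1)⁻¹
  have hspan : ⊤ ≤ Submodule.span K (Set.range Θ) := by
    rw [← pb.basis.span_eq, Submodule.span_le]
    rintro _ ⟨j, rfl⟩
    rw [pb.basis_eq_pow, pow_eq_sum_inv_algebraMap_mul_sub_one hω ha hθ (hdim ▸ j.isLt)]
    refine Submodule.sum_mem _ fun t ht => Submodule.smul_mem _ _ (Submodule.subset_span ⟨t, ?_⟩)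
    simp only [Θ, ZMod.val_cast_of_lt (mem_range.mp ht)]
  refine ⟨basisOfTopLeSpanOfCardEqFinrank Θ hspan ?_,
    congrFun (coe_basisOfTopLeSpanOfCardEqFinrank Θ _ _)⟩
  rw [ZMod.card, pb.finrank, hdim]

theorem algEquiv_apply_inv_algebraMap_mul_sub_one [NeZero n] {ω : K} (hω : ω ^ n = 1)
    (σ : L ≃ₐ[K] L) (hσ : σ θ = algebraMap K L ω * θ) (k : ZMod n) :
    σ (algebraMap K L (ω⁻¹ ^ k.val) * θ - 1)⁻¹ =
      (algebraMap K L (ω⁻¹ ^ (k - 1).val) * θ - 1)⁻¹ := by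
  have hω0 : ω ≠ 0 := by rintro rfl; simp [NeZero.ne n] at hω
  have hcoef : ω⁻¹ ^ k.val * ω = ω⁻¹ ^ (k - 1).val := by
    rw [← pow_val_sub_one_mul (by rw [inv_pow, hω, inv_one]) k, mul_assoc, inv_mul_cancel₀ hω0,
      mul_one]
  rw [map_inv₀, map_sub, map_one, map_mul, AlgEquiv.commutes, hσ, ← mul_assoc, ← map_mul, hcoef]

end KummerNormalBasis

theorem stmt_6_general (K : Type*) [Field K]
    (m n : ℕ) [NeZero n] (hm : 2 ≤ m) (hn : 2 ≤ n)
    (ζ : K) (hζ : IsPrimitiveRoot ζ (m * n))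
    (a : K)
    (ha : ∀ r : ℕ, 0 < r → r < n → ¬ ∃ x : K, x ^ n = a ^ r) :
    ∃ hirr : Irreducible (X ^ n - C a : K[X]),
      letI : Fact (Irreducible (X ^ n - C a : K[X])) := ⟨hirr⟩
      ∀ Θ : ZMod n → AdjoinRoot (X ^ n - C a : K[X]),
        (∀ k : ZMod n, Θ k =
          (algebraMap K (AdjoinRoot (X ^ n - C a : K[X])) (((ζ ^ m)⁻¹) ^ k.val) *
              AdjoinRoot.root (X ^ n - C a : K[X]) - 1)⁻¹) →
        (∃ B : Module.Basis (ZMod n) K (AdjoinRoot (X ^ n - C a : K[X])),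
          ∀ k : ZMod n, B k = Θ k) ∧
        ∀ σ : AdjoinRoot (X ^ n - C a : K[X]) ≃ₐ[K] AdjoinRoot (X ^ n - C a : K[X]),
          σ (AdjoinRoot.root (X ^ n - C a : K[X])) =
              algebraMap K (AdjoinRoot (X ^ n - C a : K[X])) (ζ ^ m) *
                AdjoinRoot.root (X ^ n - C a : K[X]) →
          ∀ k : ZMod n, σ (Θ k) = Θ (k - 1) := by
  have hirr := X_pow_sub_C_irreducible_of_forall_lt_not_pow (NeZero.ne n) ha
  refine ⟨hirr, ?_⟩
  have : Fact (Irreducible (X ^ n - C a : K[X])) := ⟨hirr⟩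
  have hω : IsPrimitiveRoot (ζ ^ m) n := hζ.pow (by positivity) rfl
  have ha1 : a ≠ 1 := fun h => ha 1 one_pos hn ⟨1, by rw [h, one_pow, one_pow]⟩
  have hθ : AdjoinRoot.root (X ^ n - C a) ^ n = algebraMap K _ a := root_X_pow_sub_C_pow n a
  rintro Θ hΘ
  obtain rfl : Θ = _ := funext hΘ
  refine ⟨?_, fun σ hσ => algEquiv_apply_inv_algebraMap_mul_sub_one hω.pow_eq_one σ hσ⟩
  have hf : (X ^ n - C a : K[X]) ≠ 0 := hirr.ne_zero
  exact exists_basis_inv_algebraMap_mul_sub_one hω.inv ha1 (AdjoinRoot.powerBasis hf)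
    natDegree_X_pow_sub_C hθ

/-- In the Kummer extension `L = K[X]/(X^n - a)` with `θ` the class of `X` and
`ζ = ζ_{mn}^m`, the family `θ_k = 1/(ζ^{-k} θ - 1)` is a `K`-basis of `L`, and the
generator `σ` of `Gal(L/K)` with `σ(θ) = ζθ` satisfies `σ(θ_k) = θ_{k-1}` (indices
mod `n`): it is a normal basis. -/
theorem stmt_6 (K : Type*) [Field K] (p : ℕ) (hp : 0 < p) [CharP K p]
    (m n : ℕ) [NeZero n] (hm : 2 ≤ m) (hn : 2 ≤ n) (hcop : Nat.Coprime (m * n) p)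
    (ζ : K) (hζ : IsPrimitiveRoot ζ (m * n))
    (a : K) (ha0 : a ≠ 0)
    (ha : ∀ r : ℕ, 0 < r → r < n → ¬ ∃ x : K, x ^ n = a ^ r) :
    ∃ hirr : Irreducible (X ^ n - C a : K[X]),
      letI : Fact (Irreducible (X ^ n - C a : K[X])) := ⟨hirr⟩
      ∀ Θ : ZMod n → AdjoinRoot (X ^ n - C a : K[X]),
        (∀ k : ZMod n, Θ k =
          (algebraMap K (AdjoinRoot (X ^ n - C a : K[X])) (((ζ ^ m)⁻¹) ^ k.val) *
              AdjoinRoot.root (X ^ n - C a : K[X]) - 1)⁻¹) →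
        (∃ B : Module.Basis (ZMod n) K (AdjoinRoot (X ^ n - C a : K[X])),
          ∀ k : ZMod n, B k = Θ k) ∧
        ∀ σ : AdjoinRoot (X ^ n - C a : K[X]) ≃ₐ[K] AdjoinRoot (X ^ n - C a : K[X]),
          σ (AdjoinRoot.root (X ^ n - C a : K[X])) =
              algebraMap K (AdjoinRoot (X ^ n - C a : K[X])) (ζ ^ m) *
                AdjoinRoot.root (X ^ n - C a : K[X]) →
          ∀ k : ZMod n, σ (Θ k) = Θ (k - 1) :=
  stmt_6_general K m n hm hn ζ hζ a ha
end

section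
/- Let K be a field of characteristic p > 0 containing a primitive mn-th root of unity ζ_{mn} with m, n ≥ 2 and mn prime to p; set ζ = (ζ_{mn})^m. Let a ∈ K* have class of order n in K*/(K*)^n, let L = K[X]/(X^n − a), θ the class of X, and θ_k = 1/(ζ^{−k}θ − 1) for 0 ≤ k ≤ n − 1. Then for every i with 1 ≤ i ≤ n − 1 one has θ_0 · θ_i = (ζ^{−i} − 1)^{−1}(θ_0 − ζ^{−i} θ_i), and consequently the total number of nonzero coefficients appearing when each product θ_0 · θ_i (for 0 ≤ i ≤ n − 1) is expanded in the basis (θ_0, …, θ_{n−1}) is at most 3n − 2. -/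
open Polynomial

/-!
If `g` is an irreducible factor of `Xⁿ - a` of degree `d`, the norm `N` of a root `r` of `g`
satisfies `N(r)ⁿ = N(a) = aᵈ`, so the hypothesis on `a` forces `d = n`. In particular `θ ∉ K`,
so all the `θ_k` are defined, and for `w = ζ^{-i} ≠ 1` the partial fraction decomposition
`1/((θ - 1)(wθ - 1)) = (w - 1)⁻¹ (1/(θ - 1) - w/(wθ - 1))` gives the product formula.
Hence `θ_0 θ_i` has at most two nonzero coordinates for `i ≠ 0`, while `θ_0²` has at most `n`,
and `n + 2(n - 1) = 3n - 2`.
-/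

theorem X_pow_sub_C_irreducible_of_forall_not_exists_pow_eq_pow {K : Type*} [Field K] {n : ℕ}
    (hn : 0 < n) {a : K} (ha : ∀ r : ℕ, 0 < r → r < n → ¬ ∃ x : K, x ^ n = a ^ r) :
    Irreducible (X ^ n - C a : K[X]) := by
  have hne : X ^ n - C a ≠ 0 := X_pow_sub_C_ne_zero hn a
  have hunit : ¬ IsUnit (X ^ n - C a) := by
    rw [Polynomial.isUnit_iff_degree_eq_zero, degree_X_pow_sub_C hn, Nat.cast_eq_zero]
    exact hn.ne'
  obtain ⟨g, hg, hgdvd⟩ := WfDvdMonoid.exists_irreducible_factor hunit hne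
  have hdeg_le : g.natDegree ≤ n := natDegree_X_pow_sub_C (n := n) (r := a) ▸
    natDegree_le_of_dvd hgdvd hne
  suffices g.natDegree = n from (associated_of_dvd_of_natDegree_le hgdvd hne
    (this.trans natDegree_X_pow_sub_C.symm).ge).irreducible hg
  refine hdeg_le.eq_or_lt.resolve_right fun hlt ↦
    ha _ ?_ hlt ⟨Algebra.norm K (AdjoinRoot.root g), ?_⟩
  · exact natDegree_pos_iff_degree_pos.mpr (degree_pos_of_irreducible hg)
  have hroot := eval₂_eq_zero_of_dvd_of_eval₂_eq_zero _ _ hgdvd (AdjoinRoot.eval₂_root g)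
  rw [eval₂_sub, eval₂_pow, eval₂_C, eval₂_X, sub_eq_zero] at hroot
  rw [← map_pow, hroot, ← AdjoinRoot.algebraMap_eq, Algebra.norm_algebraMap,
    (AdjoinRoot.powerBasis hg.ne_zero).finrank, AdjoinRoot.powerBasis_dim hg.ne_zero]

theorem root_X_pow_sub_C_ne_algebraMap {K : Type*} [Field K] {n : ℕ} {a : K}
    [Fact (Irreducible (X ^ n - C a))] (ha : ∀ x : K, x ^ n ≠ a) (c : K) :
    AdjoinRoot.root (X ^ n - C a) ≠ algebraMap K _ c := fun h ↦ by
  refine ha c ((algebraMap K (AdjoinRoot (X ^ n - C a))).injective ?_)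
  rw [map_pow, ← h, AdjoinRoot.algebraMap_eq, ← root_X_pow_sub_C_pow]

theorem algebraMap_mul_root_X_pow_sub_C_ne_one {K : Type*} [Field K] {n : ℕ} {a : K}
    [Fact (Irreducible (X ^ n - C a))] (ha : ∀ x : K, x ^ n ≠ a) (c : K) :
    algebraMap K _ c * AdjoinRoot.root (X ^ n - C a) ≠ 1 := fun h ↦
  root_X_pow_sub_C_ne_algebraMap ha c⁻¹ (by rw [map_inv₀]; exact eq_inv_of_mul_eq_one_right h)

theorem inv_sub_one_mul_inv_mul_sub_one {F : Type*} [Field F] {w x : F} (hw : w ≠ 1)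
    (hx : x ≠ 1) (hwx : w * x ≠ 1) :
    (x - 1)⁻¹ * (w * x - 1)⁻¹ = (w - 1)⁻¹ * ((x - 1)⁻¹ - w * (w * x - 1)⁻¹) := by
  have hw' := sub_ne_zero.2 hw
  have hx' := sub_ne_zero.2 hx
  have hwx' := sub_ne_zero.2 hwx
  rw [eq_inv_mul_iff_mul_eq₀ hw']
  field_simp
  ring

theorem Module.Basis.card_support_repr_smul_sub_smul_le {ι R M : Type*} [Ring R]
    [AddCommGroup M] [Module R M] (B : Module.Basis ι R M) (i j : ι) (c d : R) :
    (B.repr (c • B i - d • B j)).support.card ≤ 2 := by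
  classical
  simp only [sub_eq_add_neg, ← neg_smul, map_add, map_smul, B.repr_self, Finsupp.smul_single,
    smul_eq_mul, mul_one]
  exact (Finset.card_le_card Finsupp.support_single_add_single_subset).trans Finset.card_le_two

theorem Fintype.sum_le_of_le_of_forall_ne_le {ι : Type*} [Fintype ι] [DecidableEq ι]
    (f : ι → ℕ) (i₀ : ι) {A b : ℕ} (h₀ : f i₀ ≤ A) (h : ∀ i ≠ i₀, f i ≤ b) :
    ∑ i, f i ≤ A + (Fintype.card ι - 1) * b := by
  rw [← Finset.add_sum_erase _ f (Finset.mem_univ i₀)]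
  grw [h₀, Finset.sum_le_card_nsmul _ f b fun i hi ↦ h i (Finset.ne_of_mem_erase hi),
    Finset.card_erase_of_mem (Finset.mem_univ i₀), Finset.card_univ, smul_eq_mul]

theorem stmt_7_general (K : Type*) [Field K]
    (m n : ℕ) [NeZero n] (hm : 2 ≤ m) (hn : 2 ≤ n)
    (ζ : K) (hζ : IsPrimitiveRoot ζ (m * n))
    (a : K)
    (ha : ∀ r : ℕ, 0 < r → r < n → ¬ ∃ x : K, x ^ n = a ^ r) :
    ∃ hirr : Irreducible (X ^ n - C a : K[X]),
      letI : Fact (Irreducible (X ^ n - C a : K[X])) := ⟨hirr⟩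
      ∀ Θ : ZMod n → AdjoinRoot (X ^ n - C a : K[X]),
        (∀ k : ZMod n, Θ k =
          (algebraMap K (AdjoinRoot (X ^ n - C a : K[X])) (((ζ ^ m)⁻¹) ^ k.val) *
              AdjoinRoot.root (X ^ n - C a : K[X]) - 1)⁻¹) →
        (∀ i : ZMod n, i ≠ 0 →
          Θ 0 * Θ i =
            algebraMap K (AdjoinRoot (X ^ n - C a : K[X]))
                ((((ζ ^ m)⁻¹) ^ i.val - 1)⁻¹) *
              (Θ 0 - algebraMap K (AdjoinRoot (X ^ n - C a : K[X]))
                  (((ζ ^ m)⁻¹) ^ i.val) * Θ i)) ∧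
        ∀ B : Module.Basis (ZMod n) K (AdjoinRoot (X ^ n - C a : K[X])),
          (∀ k : ZMod n, B k = Θ k) →
          ∑ i : ZMod n, (B.repr (Θ 0 * Θ i)).support.card ≤ 3 * n - 2 := by
  have hirr := X_pow_sub_C_irreducible_of_forall_not_exists_pow_eq_pow (by omega) ha
  refine ⟨hirr, ?_⟩
  have : Fact (Irreducible (X ^ n - C a)) := ⟨hirr⟩
  intro Θ hΘ
  have hω : IsPrimitiveRoot (ζ ^ m)⁻¹ n :=
    (hζ.pow (Nat.mul_pos (by omega) (NeZero.pos n)) rfl).inv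
  have hθ : ∀ c : K, algebraMap K _ c * AdjoinRoot.root (X ^ n - C a) ≠ 1 :=
    algebraMap_mul_root_X_pow_sub_C_ne_one fun x hx ↦ ha 1 one_pos hn ⟨x, by rw [hx, pow_one]⟩
  have hprod : ∀ i : ZMod n, i ≠ 0 → Θ 0 * Θ i =
      algebraMap K _ (((ζ ^ m)⁻¹ ^ i.val - 1)⁻¹) *
        (Θ 0 - algebraMap K _ ((ζ ^ m)⁻¹ ^ i.val) * Θ i) := by
    intro i hi
    have hw : (ζ ^ m)⁻¹ ^ i.val ≠ 1 :=
      hω.pow_ne_one_of_pos_of_lt (ZMod.val_pos.2 hi).ne' (ZMod.val_lt i)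
    rw [hΘ 0, hΘ i, ZMod.val_zero, pow_zero, map_one, one_mul, map_inv₀, map_sub, map_one]
    refine inv_sub_one_mul_inv_mul_sub_one ?_ (by simpa using hθ 1) (hθ _)
    exact fun h ↦ hw ((algebraMap K _).injective (h.trans (map_one _).symm))
  refine ⟨hprod, fun B hB ↦ ?_⟩
  have hcard := Fintype.sum_le_of_le_of_forall_ne_le
    (fun i ↦ (B.repr (Θ 0 * Θ i)).support.card) 0
    ((Finset.card_le_univ _).trans_eq (ZMod.card n)) fun i hi ↦ by
      rw [hprod i hi, mul_sub, ← mul_assoc, ← map_mul, ← hB, ← hB, ← Algebra.smul_def,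
        ← Algebra.smul_def]
      exact B.card_support_repr_smul_sub_smul_le 0 i _ _
  rw [ZMod.card] at hcard
  omega

/-- In the Kummer normal basis `θ_k = 1/(ζ^{-k} θ - 1)`, one has
`θ_0 · θ_i = (ζ^{-i} - 1)⁻¹ (θ_0 - ζ^{-i} θ_i)` for `i ≠ 0`, and the total number of
nonzero coefficients of the products `θ_0 · θ_i` in the basis `(θ_0, …, θ_{n-1})` is
at most `3n - 2`. -/
theorem stmt_7 (K : Type*) [Field K] (p : ℕ) (hp : 0 < p) [CharP K p]
    (m n : ℕ) [NeZero n] (hm : 2 ≤ m) (hn : 2 ≤ n) (hcop : Nat.Coprime (m * n) p)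
    (ζ : K) (hζ : IsPrimitiveRoot ζ (m * n))
    (a : K) (ha0 : a ≠ 0)
    (ha : ∀ r : ℕ, 0 < r → r < n → ¬ ∃ x : K, x ^ n = a ^ r) :
    ∃ hirr : Irreducible (X ^ n - C a : K[X]),
      letI : Fact (Irreducible (X ^ n - C a : K[X])) := ⟨hirr⟩
      ∀ Θ : ZMod n → AdjoinRoot (X ^ n - C a : K[X]),
        (∀ k : ZMod n, Θ k =
          (algebraMap K (AdjoinRoot (X ^ n - C a : K[X])) (((ζ ^ m)⁻¹) ^ k.val) *
              AdjoinRoot.root (X ^ n - C a : K[X]) - 1)⁻¹) →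
        (∀ i : ZMod n, i ≠ 0 →
          Θ 0 * Θ i =
            algebraMap K (AdjoinRoot (X ^ n - C a : K[X]))
                ((((ζ ^ m)⁻¹) ^ i.val - 1)⁻¹) *
              (Θ 0 - algebraMap K (AdjoinRoot (X ^ n - C a : K[X]))
                  (((ζ ^ m)⁻¹) ^ i.val) * Θ i)) ∧
        ∀ B : Module.Basis (ZMod n) K (AdjoinRoot (X ^ n - C a : K[X])),
          (∀ k : ZMod n, B k = Θ k) →
          ∑ i : ZMod n, (B.repr (Θ 0 * Θ i)).support.card ≤ 3 * n - 2 :=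
  stmt_7_general K m n hm hn ζ hζ a ha
end

section
/- Let K be a field, let n ≥ 2 be an integer invertible in K, let ζ ∈ K be a primitive n-th root of unity, and let R ∈ K* be an element with R^n ≠ 1. Then the element Σ_{k ∈ Z/nZ} (Rζ^k − 1)^{−1} · e_k of the group algebra K[Z/nZ] is a unit; equivalently, the vector ((Rζ^k − 1)^{−1})_{k ∈ Z/nZ} is invertible for the convolution product on K^{Z/nZ}. -/
/-!
The character `ψ k = ζ ^ k` of `ZMod n` is primitive, so the elements
`e m = n⁻¹ • ∑ k, single k (ψ (m * k))` form a complete family of orthogonal idempotents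
of `K[ZMod n]`. Expanding `(R ψ k - 1)⁻¹ = (R ^ n - 1)⁻¹ * ∑_{m < n} (R ψ k) ^ m` as a geometric
series writes the given element as `∑ m, (n R ^ m / (R ^ n - 1)) • e m`. All these coefficients
are nonzero, so `∑ m, ((R ^ n - 1) / (n R ^ m)) • e m` is its inverse.
-/

open Finset AddMonoidAlgebra

theorem OrthogonalIdempotents.sum_smul_mul_sum_smul {K A ι : Type*} [Semifield K] [Semiring A]
    [Algebra K A] [Fintype ι] {e : ι → A} (he : OrthogonalIdempotents e) (c d : ι → K) :
    (∑ i, c i • e i) * ∑ i, d i • e i = ∑ i, (c i * d i) • e i := by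
  classical
  simp_rw [sum_mul_sum, smul_mul_smul_comm, he.mul_eq, smul_ite, smul_zero, sum_ite_eq,
    mem_univ, if_true]

theorem CompleteOrthogonalIdempotents.isUnit_sum_smul {K A ι : Type*} [Semifield K] [Semiring A]
    [Algebra K A] [Fintype ι] {e : ι → A} (he : CompleteOrthogonalIdempotents e) {c : ι → K}
    (hc : ∀ i, c i ≠ 0) : IsUnit (∑ i, c i • e i) := by
  have mul_eq_one : ∀ d d' : ι → K, (∀ i, d i * d' i = 1) →
      (∑ i, d i • e i) * ∑ i, d' i • e i = 1 := fun d d' hd => by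
    simp_rw [he.sum_smul_mul_sum_smul, hd, one_smul, he.complete]
  exact ⟨⟨_, _, mul_eq_one c _ fun i => mul_inv_cancel₀ (hc i),
    mul_eq_one _ c fun i => inv_mul_cancel₀ (hc i)⟩, rfl⟩

theorem AddMonoidAlgebra.single_finsetSum {R M ι : Type*} [Semiring R] (s : Finset ι)
    (f : ι → R) (m : M) : single m (∑ i ∈ s, f i) = ∑ i ∈ s, single m (f i) :=
  map_sum (singleAddHom m) f s

theorem ZMod.sum_comp_val {M : Type*} [AddCommMonoid M] (n : ℕ) [NeZero n] (f : ℕ → M) :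
    ∑ k : ZMod n, f k.val = ∑ i ∈ range n, f i :=
  sum_nbij ZMod.val (fun k _ => mem_range.2 k.val_lt) (ZMod.val_injective n).injOn
    (fun i hi => ⟨i, mem_univ _, ZMod.val_cast_of_lt (mem_range.1 hi)⟩) fun _ _ => rfl

theorem inv_sub_one_eq_inv_mul_geom_sum {K : Type*} [Field K] {y : K} {n : ℕ} (hy : y ^ n ≠ 1) :
    (y - 1)⁻¹ = (y ^ n - 1)⁻¹ * ∑ i ∈ range n, y ^ i := by
  have hy1 : y ≠ 1 := by rintro rfl; exact hy (one_pow n)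
  rw [geom_sum_eq hy1, ← div_eq_inv_mul, div_div_cancel_left' (sub_ne_zero.2 hy)]

namespace AddChar

variable {K G : Type*} [Field K] [AddCommGroup G] [Fintype G]

noncomputable def idempotent (ψ : AddChar G K) : AddMonoidAlgebra K G :=
  (Fintype.card G : K)⁻¹ • ∑ g, single g (ψ g)

theorem single_mul_sum_single (ψ : AddChar G K) (h : G) (x : K) :
    single h x * ∑ g, single g (ψ g) = (x * ψ (-h)) • ∑ g, single g (ψ g) := by
  rw [mul_sum, smul_sum]
  refine Fintype.sum_equiv (Equiv.addLeft h) _ _ fun g => ?_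
  rw [single_mul_single, smul_single', Equiv.coe_addLeft, map_add_eq_mul, mul_assoc,
    ← mul_assoc (ψ (-h)), ← map_add_eq_mul, neg_add_cancel, map_zero_eq_one, one_mul]

theorem sum_single_mul_sum_single (φ ψ : AddChar G K) :
    (∑ g, single g (φ g)) * ∑ g, single g (ψ g) = (∑ g, (φ / ψ) g) • ∑ g, single g (ψ g) := by
  simp_rw [sum_mul, single_mul_sum_single, sum_smul, div_apply]

theorem idempotent_mul_idempotent [DecidableEq (AddChar G K)] (hG : (Fintype.card G : K) ≠ 0)
    (φ ψ : AddChar G K) : idempotent φ * idempotent ψ = if φ = ψ then idempotent ψ else 0 := by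
  rw [idempotent, idempotent, smul_mul_smul_comm, sum_single_mul_sum_single, smul_smul,
    sum_eq_ite, mul_ite, mul_zero, ite_smul, zero_smul]
  have hdiv : φ / ψ = 0 ↔ φ = ψ := div_eq_one
  simp only [hdiv, inv_mul_cancel_right₀ hG]

variable {R : Type*} [CommRing R]

theorem mulShift_eq_one_iff {ψ : AddChar R K} (hψ : ψ.IsPrimitive) {r : R} :
    ψ.mulShift r = 1 ↔ r = 0 := by
  rw [← mulShift_zero ψ]
  exact (to_mulShift_inj_of_isPrimitive hψ).eq_iff

theorem sum_idempotent_mulShift [Fintype R] (hR : (Fintype.card R : K) ≠ 0) {ψ : AddChar R K}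
    (hψ : ψ.IsPrimitive) : ∑ r, idempotent (ψ.mulShift r) = 1 := by
  classical
  have hsum : ∀ x : R, ∑ r, ψ.mulShift r x = if x = 0 then (Fintype.card R : K) else 0 := by
    intro x
    simp_rw [mulShift_apply, mul_comm _ x, ← mulShift_apply (ψ := ψ), sum_eq_ite]
    simp only [show ψ.mulShift x = 0 ↔ x = 0 from mulShift_eq_one_iff hψ]
  simp_rw [idempotent, ← smul_sum]
  rw [sum_comm]
  simp_rw [← single_finsetSum, hsum]
  rw [Fintype.sum_eq_single 0 fun x hx => by rw [if_neg hx, single_zero], if_pos rfl,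
    smul_single', inv_mul_cancel₀ hR, one_def]

theorem completeOrthogonalIdempotents_idempotent_mulShift [Fintype R]
    (hR : (Fintype.card R : K) ≠ 0) {ψ : AddChar R K} (hψ : ψ.IsPrimitive) :
    CompleteOrthogonalIdempotents fun r => idempotent (ψ.mulShift r) := by
  classical
  refine ⟨⟨fun r => ?_, fun r s hrs => ?_⟩, sum_idempotent_mulShift hR hψ⟩
  · rw [IsIdempotentElem, idempotent_mul_idempotent hR, if_pos rfl]
  · exact (idempotent_mul_idempotent hR _ _).trans
      (if_neg ((to_mulShift_inj_of_isPrimitive hψ).ne hrs))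

theorem map_zmod_pow_eq_one {n : ℕ} (ψ : AddChar (ZMod n) K) (k : ZMod n) : ψ k ^ n = 1 := by
  rw [← map_nsmul_eq_pow, nsmul_eq_mul, ZMod.natCast_self, zero_mul, map_zero_eq_one]

variable {n : ℕ} [NeZero n]

theorem map_zmod_mul_eq_pow (ψ : AddChar (ZMod n) K) (m k : ZMod n) :
    ψ (m * k) = ψ k ^ m.val := by
  rw [← map_nsmul_eq_pow, nsmul_eq_mul, ZMod.natCast_zmod_val]

theorem sum_single_inv_mul_sub_one_eq_sum_smul_idempotent (hn : (n : K) ≠ 0)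
    (ψ : AddChar (ZMod n) K) {R : K} (hR : R ^ n ≠ 1) :
    ∑ k : ZMod n, single k ((R * ψ k - 1)⁻¹) =
      ∑ m : ZMod n, (n * R ^ m.val / (R ^ n - 1)) • (ψ.mulShift m).idempotent := by
  simp_rw [idempotent, ZMod.card, smul_smul, smul_sum, smul_single', mulShift_apply]
  rw [sum_comm]
  refine sum_congr rfl fun k _ => ?_
  have hpow : (R * ψ k) ^ n = R ^ n := by rw [mul_pow, ψ.map_zmod_pow_eq_one, mul_one]
  rw [← single_finsetSum, inv_sub_one_eq_inv_mul_geom_sum (hpow ▸ hR), hpow,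
    ← ZMod.sum_comp_val n fun i => (R * ψ k) ^ i, mul_sum]
  refine congr_arg _ (sum_congr rfl fun m _ => ?_)
  rw [ψ.map_zmod_mul_eq_pow, mul_pow]
  field_simp

end AddChar

theorem stmt_8_general (K : Type*) [Field K] (n : ℕ) [NeZero n]
    (hninv : (n : K) ≠ 0) (ζ : K) (hζ : IsPrimitiveRoot ζ n)
    (R : K) (hR0 : R ≠ 0) (hRn : R ^ n ≠ 1) :
    IsUnit ((∑ k : ZMod n,
        AddMonoidAlgebra.single k ((R * ζ ^ k.val - 1)⁻¹)) :
      AddMonoidAlgebra K (ZMod n)) := by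
  let ψ := AddChar.zmodChar n hζ.pow_eq_one
  have hψ : ψ.IsPrimitive := AddChar.zmodChar_primitive_of_primitive_root n hζ
  change IsUnit (∑ k : ZMod n, single k ((R * ψ k - 1)⁻¹))
  rw [ψ.sum_single_inv_mul_sub_one_eq_sum_smul_idempotent hninv hRn]
  refine (ψ.completeOrthogonalIdempotents_idempotent_mulShift (by rwa [ZMod.card]) hψ)
    |>.isUnit_sum_smul fun m => ?_
  exact div_ne_zero (mul_ne_zero hninv (pow_ne_zero _ hR0)) (sub_ne_zero.2 hRn)

/-- If `K` is a field, `n ≥ 2` is invertible in `K`, `ζ ∈ K` is a primitive `n`-th root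
of unity, and `R ∈ K*` satisfies `R^n ≠ 1`, then `Σ_{k ∈ Z/nZ} (Rζ^k - 1)⁻¹ · e_k` is a
unit of the group algebra `K[Z/nZ]`, i.e. the vector `((Rζ^k - 1)⁻¹)_k` is invertible
for the convolution product. -/
theorem stmt_8 (K : Type*) [Field K] (n : ℕ) [NeZero n] (hn : 2 ≤ n)
    (hninv : (n : K) ≠ 0) (ζ : K) (hζ : IsPrimitiveRoot ζ n)
    (R : K) (hR0 : R ≠ 0) (hRn : R ^ n ≠ 1) :
    IsUnit ((∑ k : ZMod n,
        AddMonoidAlgebra.single k ((R * ζ ^ k.val - 1)⁻¹)) :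
      AddMonoidAlgebra K (ZMod n)) :=
  stmt_8_general K n hninv ζ hζ R hR0 hRn
end

section
/- Let K be a field of characteristic p > 0 containing a primitive mn-th root of unity ζ_{mn} with m, n ≥ 2 and mn prime to p; set ζ = (ζ_{mn})^m. Let a ∈ K* have class of order n in K*/(K*)^n, let L = K[X]/(X^n − a), θ the class of X, and θ_k = 1/(ζ^{−k}θ − 1) for k ∈ Z/nZ, so Θ = (θ_k)_k is a normal basis of L/K. Let ī ∈ K^{Z/nZ} be the coordinate vector of θ_0^2 in Θ. Set R = ζ_{mn}, u_R = ((Rζ^k − 1)^{−1})_{k ∈ Z/nZ} and w_R = ((Rζ^k − 1)^{−2})_{k ∈ Z/nZ}; let u_R^{−1} be the inverse of u_R for the convolution product. Then for all vectors α, β ∈ K^{Z/nZ}, the coordinate vector in Θ of the product (Σ_i α_i θ_i) · (Σ_j β_j θ_j) equals ī ⋆ (α ⋄ β) + u_R^{−1} ⋆ ( (u_R ⋆ α) ⋄ (u_R ⋆ β) − w_R ⋆ (α ⋄ β) ). -/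
/-!
Both the basis vectors `θ_k = 1/(ζ^{-k} θ - 1)` and the entries
`u_R(l - k) = 1/(ζ^{-k} (R ζ^l) - 1)` are values of one family `k ↦ 1/(ζ^{-k} c - 1)`, at `c = θ`
and at `c = R ζ^l`. For `i ≠ j` the partial fraction decomposition of the product of two members
of the family has coefficients independent of `c`, so the `K`-linear form `θ_s ↦ u_R(l - s)`,
which on coordinates is `(u_R ⋆ ·)(l)`, is multiplicative on the off-diagonal products `θ_i θ_j`.
The diagonal products `θ_i²` are the images of `θ_0²` under the automorphisms `θ ↦ ζ^{-i} θ`,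
which permute the basis cyclically; they contribute `ī ⋆ (α ⋄ β)`. Hence `u_R` convolved with
(coordinates of the product `- ī ⋆ (α ⋄ β)`) is `(u_R ⋆ α) ⋄ (u_R ⋆ β) - w_R ⋆ (α ⋄ β)`, and
convolving with `u_R⁻¹` gives the formula.
-/

open Polynomial

noncomputable def conv {K : Type*} [CommRing K] {n : ℕ} [NeZero n]
    (α β : ZMod n → K) : ZMod n → K :=
  fun k => ∑ i : ZMod n, α i * β (k - i)

section Convolution

variable {R : Type*} [CommRing R] {n : ℕ} [NeZero n]

theorem conv_apply (α β : ZMod n → R) (k : ZMod n) :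
    conv α β k = ∑ i, α i * β (k - i) := rfl

theorem conv_comm (α β : ZMod n → R) : conv α β = conv β α := by
  funext k
  refine Fintype.sum_equiv (Equiv.subLeft k) _ _ fun i => ?_
  simp [Equiv.subLeft, mul_comm]

theorem conv_assoc (α β γ : ZMod n → R) : conv (conv α β) γ = conv α (conv β γ) := by
  funext k
  simp only [conv_apply, Finset.sum_mul, Finset.mul_sum]
  rw [Finset.sum_comm]
  refine Finset.sum_congr rfl fun i _ => Fintype.sum_equiv (Equiv.subRight i) _ _ fun j => ?_
  rw [Equiv.subRight_apply, mul_assoc, sub_sub, add_sub_cancel]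

theorem conv_sub (α β γ : ZMod n → R) : conv α (β - γ) = conv α β - conv α γ := by
  funext k
  simp only [conv_apply, Pi.sub_apply, mul_sub, Finset.sum_sub_distrib]

theorem delta_conv (α : ZMod n → R) : conv (fun k => if k = 0 then 1 else 0) α = α := by
  funext k
  simp [conv_apply]

theorem conv_conv_cancel {u v : ZMod n → R} (h : conv u v = fun k => if k = 0 then 1 else 0)
    (α : ZMod n → R) : conv v (conv u α) = α := by
  rw [← conv_assoc, conv_comm v u, h, delta_conv]

theorem conv_comp_sub_right (α β : ZMod n → R) (i k : ZMod n) :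
    conv α (fun s => β (s - i)) k = conv α β (k - i) := by
  simp only [conv_apply, sub_right_comm]

theorem conv_mul_conv_apply (u α β : ZMod n → R) (l : ZMod n) :
    (conv u α * conv u β) l = ∑ i, ∑ j, α i * β j * (u (l - i) * u (l - j)) := by
  rw [Pi.mul_apply, conv_comm u α, conv_comm u β, conv_apply, conv_apply, Finset.sum_mul_sum]
  exact Finset.sum_congr rfl fun i _ => Finset.sum_congr rfl fun j _ => by ring

theorem conv_repr_eq_constr {M : Type*} [AddCommGroup M] [Module R M]
    (B : Module.Basis (ZMod n) R M) (u : ZMod n → R) (x : M) (l : ZMod n) :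
    conv u (B.repr x) l = B.constr R (fun s => u (l - s)) x := by
  rw [conv_comm, Module.Basis.constr_apply_fintype, conv_apply]
  simp [mul_comm]

end Convolution

theorem Finset.sum_sum_sub_sum_diag_congr {ι M : Type*} [Fintype ι] [DecidableEq ι]
    [AddCommGroup M] {f g : ι → ι → M} (h : ∀ i j, i ≠ j → f i j = g i j) :
    ∑ i, ∑ j, f i j - ∑ i, f i i = ∑ i, ∑ j, g i j - ∑ i, g i i := by
  simp only [← Finset.sum_sub_distrib, ← Finset.sum_erase_eq_sub (Finset.mem_univ _)]
  exact Finset.sum_congr rfl fun i _ => Finset.sum_congr rfl fun j hj =>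
    h i j (Finset.ne_of_mem_erase hj).symm

theorem LinearMap.map_sum_smul_mul_sum_smul {ι R A : Type*} [Fintype ι] [CommRing R] [Ring A]
    [Algebra R A] (E : A →ₗ[R] R) (v : ι → A) (α β : ι → R) :
    E ((∑ i, α i • v i) * ∑ j, β j • v j) = ∑ i, ∑ j, α i * β j * E (v i * v j) := by
  simp only [Finset.sum_mul_sum, smul_mul_smul_comm, map_sum, map_smul, smul_eq_mul]

theorem pow_val_add {M : Type*} [Monoid M] {n : ℕ} [NeZero n] {z : M} (hz : z ^ n = 1)
    (x y : ZMod n) : z ^ (x + y).val = z ^ x.val * z ^ y.val := by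
  rw [ZMod.val_add, ← pow_eq_pow_mod _ hz, pow_add]

theorem pow_val_sub {K : Type*} [Field K] {n : ℕ} [NeZero n] {z : K} (hz : z ^ n = 1)
    (x y : ZMod n) : z ^ (x - y).val = z⁻¹ ^ y.val * z ^ x.val := by
  have hz0 : z ≠ 0 := fun h => by simp [h, NeZero.ne n] at hz
  rw [← sub_add_cancel x y, pow_val_add hz, add_sub_cancel_right, inv_pow]
  field_simp

section KummerFrac

variable {K F : Type*} [Field K] [Field F] [Algebra K F] {n : ℕ} [NeZero n]

/-- For `w = (ζ ^ m)⁻¹`, `kummerFrac w θ` is the basis `Θ` and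
`kummerFrac w (ζ * (ζ ^ m) ^ l.val) k = u_R (l - k)`. -/
noncomputable def kummerFrac (w : K) (c : F) (k : ZMod n) : F := (w ^ k.val • c - 1)⁻¹

theorem kummerFrac_mul_kummerFrac {w : K} (hw : IsPrimitiveRoot w n) {c : F}
    (hc : ∀ k : ZMod n, w ^ k.val • c ≠ 1) {i j : ZMod n} (hij : i ≠ j) :
    kummerFrac w c i * kummerFrac w c j =
      (w ^ (j - i).val - 1)⁻¹ • (kummerFrac w c i - w ^ (j - i).val • kummerFrac w c j) := by
  set t := w ^ (j - i).val
  have ht : t - 1 ≠ 0 := sub_ne_zero.mpr <| hw.pow_ne_one_of_pos_of_lt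
    ((ZMod.val_ne_zero _).mpr (sub_ne_zero.mpr hij.symm)) (ZMod.val_lt _)
  have hwj : w ^ j.val = t * w ^ i.val := by rw [← pow_val_add hw.pow_eq_one, sub_add_cancel]
  have hi : w ^ i.val • c - 1 ≠ 0 := sub_ne_zero.mpr (hc i)
  have hj : w ^ j.val • c - 1 ≠ 0 := sub_ne_zero.mpr (hc j)
  have ht' : algebraMap K F t - 1 ≠ 0 := by
    rw [← map_one (algebraMap K F), ← map_sub]; exact (_root_.map_ne_zero _).mpr ht
  simp only [kummerFrac, Algebra.smul_def, map_inv₀, hwj, map_mul, map_sub, map_one,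
    mul_assoc] at hi hj ⊢
  generalize algebraMap K F (w ^ i.val) * c = x at hi hj ⊢
  generalize algebraMap K F t = T at hj ht' ⊢
  have key : (x - 1)⁻¹ - T * (T * x - 1)⁻¹ = (T - 1) * ((x - 1)⁻¹ * (T * x - 1)⁻¹) := by
    linear_combination (T * (T * x - 1)⁻¹) * mul_inv_cancel₀ hi -
      (x - 1)⁻¹ * mul_inv_cancel₀ hj
  rw [key, inv_mul_cancel_left₀ ht']

theorem kummerFrac_add {w : K} (hw : w ^ n = 1) (c : F) {τ : F →ₐ[K] F} {i : ZMod n}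
    (hτ : τ c = w ^ i.val • c) (s : ZMod n) :
    τ (kummerFrac w c s) = kummerFrac w c (s + i) := by
  simp only [kummerFrac, map_inv₀, map_sub, map_smul, map_one, hτ, smul_smul, pow_val_add hw]

end KummerFrac

theorem Module.Basis.repr_apply_of_map_eq_add {ι R M : Type*} [AddCommGroup ι] [CommRing R]
    [AddCommGroup M] [Module R M] (B : Module.Basis ι R M) {f : M →ₗ[R] M} {i : ι}
    (hf : ∀ s, f (B s) = B (s + i)) (x : M) (s : ι) :
    B.repr (f x) s = B.repr x (s - i) := by
  have : (B.coord s).comp f = B.coord (s - i) := B.ext fun t => by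
    simp only [LinearMap.comp_apply, Module.Basis.coord_apply, hf, Module.Basis.repr_self]
    conv_lhs => rw [← sub_add_cancel s i]
    exact Finsupp.single_apply_left (add_left_injective i) _ _ _
  exact LinearMap.congr_fun this x

section KummerBasis

variable {K L : Type*} [Field K] [Field L] [Algebra K L] {n : ℕ} [NeZero n] {w : K} {θ : L}

theorem repr_kummerFrac_sq (hw : w ^ n = 1) (B : Module.Basis (ZMod n) K L)
    (hB : ∀ k, B k = kummerFrac w θ k)
    (hτ : ∀ i : ZMod n, ∃ τ : L →ₐ[K] L, τ θ = w ^ i.val • θ) (i s : ZMod n) :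
    B.repr (B i ^ 2) s = B.repr (B 0 ^ 2) (s - i) := by
  obtain ⟨τ, hτi⟩ := hτ i
  have hshift : ∀ s, τ (B s) = B (s + i) := fun s => by
    rw [hB, hB, kummerFrac_add hw θ hτi]
  calc B.repr (B i ^ 2) s = B.repr (τ.toLinearMap (B 0 ^ 2)) s := by
        rw [AlgHom.toLinearMap_apply, map_pow τ, hshift, zero_add]
    _ = B.repr (B 0 ^ 2) (s - i) := B.repr_apply_of_map_eq_add hshift _ _

theorem constr_kummerFrac_mul (hw : IsPrimitiveRoot w n) (B : Module.Basis (ZMod n) K L)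
    (hB : ∀ k, B k = kummerFrac w θ k) (hθ : ∀ k : ZMod n, w ^ k.val • θ ≠ 1) {c : K}
    (hc : ∀ k : ZMod n, w ^ k.val • c ≠ 1) {i j : ZMod n} (hij : i ≠ j) :
    B.constr K (kummerFrac w c) (B i * B j) = kummerFrac w c i * kummerFrac w c j := by
  rw [hB, hB, kummerFrac_mul_kummerFrac hw hθ hij, kummerFrac_mul_kummerFrac hw hc hij,
    ← hB, ← hB]
  simp only [map_smul, map_sub, Module.Basis.constr_basis]

end KummerBasis

theorem conv_repr_mul_sub_conv_repr_sq {K L : Type*} [Field K] [Field L] [Algebra K L]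
    {n : ℕ} [NeZero n] {w : K} (hw : IsPrimitiveRoot w n) {θ : L}
    (hθ : ∀ k : ZMod n, w ^ k.val • θ ≠ 1)
    (hτ : ∀ i : ZMod n, ∃ τ : L →ₐ[K] L, τ θ = w ^ i.val • θ)
    (B : Module.Basis (ZMod n) K L) (hB : ∀ k, B k = kummerFrac w θ k)
    {u c : ZMod n → K} (hu : ∀ l s, u (l - s) = kummerFrac w (c l) s)
    (hc : ∀ l k : ZMod n, w ^ k.val • c l ≠ 1) (α β : ZMod n → K) :
    conv u (B.repr ((∑ i, α i • B i) * ∑ j, β j • B j) - conv (B.repr (B 0 ^ 2)) (α * β)) =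
      conv u α * conv u β - conv (u ^ 2) (α * β) := by
  funext l
  set E := B.constr K fun s => u (l - s)
  have hoff : ∀ i j, i ≠ j → E (B i * B j) = u (l - i) * u (l - j) := fun i j hij => by
    simp only [E, hu, constr_kummerFrac_mul hw B hB hθ (hc l) hij]
  have hdiag : conv u (conv (B.repr (B 0 ^ 2)) (α * β)) l =
      ∑ i, α i * β i * E (B i * B i) := by
    rw [← conv_assoc, conv_comm, conv_apply]
    refine Finset.sum_congr rfl fun i _ => ?_
    have hshift : (fun s => B.repr (B 0 ^ 2) (s - i)) = B.repr (B i * B i) :=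
      funext fun s => by rw [← sq, repr_kummerFrac_sq hw.pow_eq_one B hB hτ i s]
    rw [Pi.mul_apply, ← conv_repr_eq_constr, ← hshift, conv_comp_sub_right]
  have hsq : conv (u ^ 2) (α * β) l = ∑ i, α i * β i * (u (l - i) * u (l - i)) := by
    rw [conv_comm, conv_apply]
    simp only [Pi.mul_apply, Pi.pow_apply, sq]
  rw [Pi.sub_apply, conv_sub, Pi.sub_apply, conv_repr_eq_constr,
    LinearMap.map_sum_smul_mul_sum_smul, hdiag, conv_mul_conv_apply, hsq]
  exact Finset.sum_sum_sub_sum_diag_congr fun i j hij => by rw [hoff i j hij]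

theorem IsPrimitiveRoot.mul_pow_pow_ne_one {M : Type*} [CommMonoid M] {ζ : M} {m n : ℕ}
    (hζ : IsPrimitiveRoot ζ (m * n)) (hm : m ≠ 1) (r : ℕ) : ζ * (ζ ^ m) ^ r ≠ 1 := by
  intro h
  rw [← pow_mul, ← pow_succ', hζ.pow_eq_one_iff_dvd] at h
  exact hm <| Nat.dvd_one.mp <|
    (Nat.dvd_add_right (dvd_mul_right m r)).mp ((dvd_mul_right m n).trans h)

theorem smul_ne_one_of_notMem_range {K L : Type*} [Field K] [Ring L] [Nontrivial L]
    [Algebra K L] {θ : L} (hθ : θ ∉ (algebraMap K L).range) (r : K) : r • θ ≠ 1 := by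
  intro h
  have hr : r ≠ 0 := by rintro rfl; simp at h
  exact hθ ⟨r⁻¹, by rw [Algebra.algebraMap_eq_smul_one, ← h, smul_smul, inv_mul_cancel₀ hr,
    one_smul]⟩

theorem exists_pow_eq_pow_natDegree_of_dvd_X_pow_sub_C {K : Type*} [Field K] {n : ℕ} {a : K}
    {q : K[X]} (hq : q ≠ 0) (hdvd : q ∣ X ^ n - C a) : ∃ b : K, b ^ n = a ^ q.natDegree := by
  have hroot : AdjoinRoot.root q ^ n = algebraMap K (AdjoinRoot q) a := by
    have := AdjoinRoot.mk_eq_zero.mpr hdvd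
    rwa [map_sub, map_pow, AdjoinRoot.mk_X, AdjoinRoot.mk_C, sub_eq_zero] at this
  refine ⟨Algebra.norm K (AdjoinRoot.root q), ?_⟩
  rw [← map_pow, hroot, Algebra.norm_algebraMap_of_basis (AdjoinRoot.powerBasis hq).basis,
    Fintype.card_fin, AdjoinRoot.powerBasis_dim]

theorem irreducible_X_pow_sub_C_of_forall_not_pow {K : Type*} [Field K] {n : ℕ} (hn : 0 < n)
    {a : K} (ha : ∀ r : ℕ, 0 < r → r < n → ¬ ∃ x : K, x ^ n = a ^ r) :
    Irreducible (X ^ n - C a) := by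
  have hne := X_pow_sub_C_ne_zero hn a
  have hdeg : (X ^ n - C a).natDegree = n := natDegree_X_pow_sub_C
  have hnu : ¬ IsUnit (X ^ n - C a) := fun h => by
    have := natDegree_eq_zero_of_isUnit h
    omega
  obtain ⟨q, hq, hdvd⟩ := WfDvdMonoid.exists_irreducible_factor hnu hne
  have hge : n ≤ q.natDegree := not_lt.mp fun hlt =>
    ha _ hq.natDegree_pos hlt (exists_pow_eq_pow_natDegree_of_dvd_X_pow_sub_C hq.ne_zero hdvd)
  exact (associated_of_dvd_of_natDegree_le hdvd hne (hdeg.trans_le hge)).irreducible hq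

section AdjoinRoot

variable {K : Type*} [Field K] {n : ℕ} {a : K}

theorem AdjoinRoot.root_X_pow_sub_C_notMem_range [Fact (Irreducible (X ^ n - C a))]
    (hn : 2 ≤ n) :
    root (X ^ n - C a) ∉ (algebraMap K (AdjoinRoot (X ^ n - C a))).range := by
  rw [← minpoly.natDegree_eq_one_iff, ← powerBasis_gen (Fact.out : Irreducible _).ne_zero,
    PowerBasis.natDegree_minpoly, powerBasis_dim, natDegree_X_pow_sub_C]
  omega

theorem AdjoinRoot.exists_algHom_root_X_pow_sub_C {c : K} (hc : c ^ n = 1) :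
    ∃ τ : AdjoinRoot (X ^ n - C a) →ₐ[K] AdjoinRoot (X ^ n - C a),
      τ (root (X ^ n - C a)) = c • root (X ^ n - C a) := by
  have h : aeval (c • root (X ^ n - C a)) (X ^ n - C a) = 0 := by
    rw [map_sub, map_pow, aeval_X, aeval_C, _root_.smul_pow, hc, one_smul,
      root_X_pow_sub_C_pow, algebraMap_eq, sub_self]
  exact ⟨liftAlgHom _ (Algebra.ofId _ _) _ h, liftAlgHom_root _ _ _ h⟩

end AdjoinRoot

theorem stmt_9_general (K : Type*) [Field K]
    (m n : ℕ) [NeZero n] (hm : 2 ≤ m) (hn : 2 ≤ n)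
    (ζ : K) (hζ : IsPrimitiveRoot ζ (m * n))
    (a : K)
    (ha : ∀ r : ℕ, 0 < r → r < n → ¬ ∃ x : K, x ^ n = a ^ r) :
    ∃ hirr : Irreducible (X ^ n - C a : K[X]),
      letI : Fact (Irreducible (X ^ n - C a : K[X])) := ⟨hirr⟩
      ∀ Θ : ZMod n → AdjoinRoot (X ^ n - C a : K[X]),
        (∀ k : ZMod n, Θ k =
          (algebraMap K (AdjoinRoot (X ^ n - C a : K[X])) (((ζ ^ m)⁻¹) ^ k.val) *
              AdjoinRoot.root (X ^ n - C a : K[X]) - 1)⁻¹) →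
        ∀ B : Module.Basis (ZMod n) K (AdjoinRoot (X ^ n - C a : K[X])),
          (∀ k : ZMod n, B k = Θ k) →
          ∀ ii : ZMod n → K, (∀ k : ZMod n, ii k = B.repr (Θ 0 ^ 2) k) →
          ∀ uR wR : ZMod n → K,
            (∀ k : ZMod n, uR k = (ζ * (ζ ^ m) ^ k.val - 1)⁻¹) →
            (∀ k : ZMod n, wR k = (ζ * (ζ ^ m) ^ k.val - 1)⁻¹ ^ 2) →
            ∀ uRinv : ZMod n → K,
              conv uR uRinv = (fun k => if k = 0 then 1 else 0) →
              ∀ α β : ZMod n → K, ∀ k : ZMod n,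
                B.repr ((∑ i : ZMod n, α i • Θ i) * (∑ j : ZMod n, β j • Θ j)) k =
                  conv ii (α * β) k +
                    conv uRinv
                      (conv uR α * conv uR β - conv wR (α * β)) k := by
  have hirr := irreducible_X_pow_sub_C_of_forall_not_pow (NeZero.pos n) ha
  let : Fact (Irreducible (X ^ n - C a : K[X])) := ⟨hirr⟩
  refine ⟨hirr, fun Θ hΘ B hB ii hii uR wR huR hwR uRinv huRinv α β k => ?_⟩
  obtain rfl : Θ = B := funext fun k => (hB k).symm
  obtain rfl : ii = B.repr (B 0 ^ 2) := funext hii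
  obtain rfl : wR = uR ^ 2 := funext fun k => by rw [hwR, Pi.pow_apply, huR]
  have hz : IsPrimitiveRoot (ζ ^ m) n := hζ.pow (by positivity) rfl
  have hR : ∀ l s : ZMod n, ((ζ ^ m)⁻¹) ^ s.val • (ζ * (ζ ^ m) ^ l.val) =
      ζ * (ζ ^ m) ^ (l - s).val := fun l s => by
    rw [pow_val_sub hz.pow_eq_one, smul_eq_mul, mul_left_comm]
  have hθ : ∀ k : ZMod n, (ζ ^ m)⁻¹ ^ k.val • AdjoinRoot.root (X ^ n - C a) ≠ 1 := fun _ =>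
    smul_ne_one_of_notMem_range (AdjoinRoot.root_X_pow_sub_C_notMem_range hn) _
  have hτ (i : ZMod n) := AdjoinRoot.exists_algHom_root_X_pow_sub_C (a := a)
    (c := (ζ ^ m)⁻¹ ^ i.val) (by rw [← pow_mul, mul_comm, pow_mul, hz.inv.pow_eq_one, one_pow])
  have key := conv_repr_mul_sub_conv_repr_sq hz.inv hθ hτ B
    (fun k => by rw [hΘ, kummerFrac, Algebra.smul_def])
    (u := uR) (c := fun l => ζ * (ζ ^ m) ^ l.val) (fun l s => by rw [huR, kummerFrac, hR])
    (fun l s => by rw [hR]; exact hζ.mul_pow_pow_ne_one (by omega) _) α β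
  rw [← key, conv_conv_cancel huRinv, Pi.sub_apply, add_sub_cancel]

/-- FFT-like multiplication formula in the Kummer normal basis
`θ_k = 1/(ζ^{-k} θ - 1)`: with `R = ζ_{mn}`, the coordinate vector of
`(Σ α_i θ_i)(Σ β_j θ_j)` equals
`ī ⋆ (α ⋄ β) + u_R⁻¹ ⋆ ((u_R ⋆ α) ⋄ (u_R ⋆ β) - w_R ⋆ (α ⋄ β))`. -/
theorem stmt_9 (K : Type*) [Field K] (p : ℕ) (hp : 0 < p) [CharP K p]
    (m n : ℕ) [NeZero n] (hm : 2 ≤ m) (hn : 2 ≤ n) (hcop : Nat.Coprime (m * n) p)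
    (ζ : K) (hζ : IsPrimitiveRoot ζ (m * n))
    (a : K) (ha0 : a ≠ 0)
    (ha : ∀ r : ℕ, 0 < r → r < n → ¬ ∃ x : K, x ^ n = a ^ r) :
    ∃ hirr : Irreducible (X ^ n - C a : K[X]),
      letI : Fact (Irreducible (X ^ n - C a : K[X])) := ⟨hirr⟩
      ∀ Θ : ZMod n → AdjoinRoot (X ^ n - C a : K[X]),
        (∀ k : ZMod n, Θ k =
          (algebraMap K (AdjoinRoot (X ^ n - C a : K[X])) (((ζ ^ m)⁻¹) ^ k.val) *
              AdjoinRoot.root (X ^ n - C a : K[X]) - 1)⁻¹) →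
        ∀ B : Module.Basis (ZMod n) K (AdjoinRoot (X ^ n - C a : K[X])),
          (∀ k : ZMod n, B k = Θ k) →
          ∀ ii : ZMod n → K, (∀ k : ZMod n, ii k = B.repr (Θ 0 ^ 2) k) →
          ∀ uR wR : ZMod n → K,
            (∀ k : ZMod n, uR k = (ζ * (ζ ^ m) ^ k.val - 1)⁻¹) →
            (∀ k : ZMod n, wR k = (ζ * (ζ ^ m) ^ k.val - 1)⁻¹ ^ 2) →
            ∀ uRinv : ZMod n → K,
              conv uR uRinv = (fun k => if k = 0 then 1 else 0) →
              ∀ α β : ZMod n → K, ∀ k : ZMod n,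
                B.repr ((∑ i : ZMod n, α i • Θ i) * (∑ j : ZMod n, β j • Θ j)) k =
                  conv ii (α * β) k +
                    conv uRinv
                      (conv uR α * conv uR β - conv wR (α * β)) k :=
  stmt_9_general K m n hm hn ζ hζ a ha
end

section
/- Let F_q be a finite field of odd characteristic, α ∈ F_q a nonsquare, and n a divisor of q + 1 with 1 < n < q + 1. Let a be a generator of the cyclic group T_α(F_q) of order q + 1, and let b be a point of T_α with coordinates in an algebraic closure of F_q such that [n]b = a (n-fold sum of b with itself in the group law). Then the subfield F_q(x(b), y(b)) generated by the coordinates of b is the degree n extension F_{q^n} of F_q; in particular [F_q(x(b), y(b)) : F_q] = n. -/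
/-- The group law of the Lucas torus `x² - αy² = 1`. -/
def tmul {F : Type*} [Field F] (α : F) (P Q : F × F) : F × F :=
  (P.1 * Q.1 + α * P.2 * Q.2, P.1 * Q.2 + Q.1 * P.2)

/-- `k`-fold sum of a point of the Lucas torus with itself ("multiplication by `k`"). -/
def tpow {F : Type*} [Field F] (α : F) (k : ℕ) (P : F × F) : F × F :=
  (tmul α P)^[k] (1, 0)

/-!
Fix `s ∈ Ω` with `s² = α`; as `α` is not a square, `s ^ q = -s`. Then `(x, y) ↦ x + s y` turns
the torus law into multiplication, `[k]` into `k`-th powers, and `x - s y` is the inverse. The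
`q^m`-Frobenius acts on `s` by `(-1)^m`, so it fixes `x` and `y` iff `u ^ q^m = u ^ (-1)^m` for
`u = x + s y`, i.e. iff `ord u ∣ (-q)^m - 1`. Every `(q+1)`-th root of unity comes from a point of
`T_α(F_q)`, so the image of `a` has order `q + 1` and that of `b` has order `n (q + 1)`. Since
`(1 - Q)^m ≡ 1 - m Q` modulo `Q²`, `n (q + 1) ∣ (-q)^m - 1` iff `n ∣ m`. On the other hand the
`q^m`-Frobenius fixes `F_q(b)` iff its degree divides `m`; so the degree and `n` have the same
multiples.
-/

section Torus

variable {F : Type*} [Field F]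

lemma tpow_succ (α : F) (k : ℕ) (P : F × F) : tpow α (k + 1) P = tmul α P (tpow α k P) :=
  Function.iterate_succ_apply' _ _ _

lemma tpow_fst_add_mul_snd {α s : F} (hs : s ^ 2 = α) (k : ℕ) (P : F × F) :
    (tpow α k P).1 + s * (tpow α k P).2 = (P.1 + s * P.2) ^ k := by
  induction k with
  | zero => simp [tpow]
  | succ k ih =>
    rw [tpow_succ, pow_succ, ← ih, ← hs]
    simp only [tmul]
    ring

lemma map_tpow {F' : Type*} [Field F'] (f : F →+* F') (α : F) (k : ℕ) (P : F × F) :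
    tpow (f α) k (f P.1, f P.2) = (f (tpow α k P).1, f (tpow α k P).2) := by
  induction k with
  | zero => simp [tpow]
  | succ k ih => simp [tpow_succ, ih, tmul]

lemma val_pow_eq_tpow {α s : F} (hs : s ^ 2 = α) {P : F × F} (u : Fˣ)
    (hu : (u : F) = P.1 + s * P.2) (hu' : ((u⁻¹ : Fˣ) : F) = P.1 - s * P.2) (k : ℕ) :
    ((u ^ k : Fˣ) : F) = (tpow α k P).1 + s * (tpow α k P).2 ∧
      (((u ^ k)⁻¹ : Fˣ) : F) = (tpow α k P).1 - s * (tpow α k P).2 := by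
  have hs' : (-s) ^ 2 = α := by rw [neg_sq, hs]
  refine ⟨by rw [Units.val_pow_eq_pow_val, hu, tpow_fst_add_mul_snd hs], ?_⟩
  rw [← inv_pow, Units.val_pow_eq_pow_val, hu', sub_eq_add_neg, ← neg_mul,
    ← tpow_fst_add_mul_snd hs']
  ring

lemma exists_val_eq_add_mul {s : F} (h2 : (2 : F) ≠ 0) (hs : s ≠ 0) (u : Fˣ) :
    ∃ x y : F, (u : F) = x + s * y ∧ ((u⁻¹ : Fˣ) : F) = x - s * y :=
  ⟨(u + u⁻¹) / 2, (u - u⁻¹) / (2 * s), by field_simp; ring, by field_simp; ring⟩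

lemma map_eq_self_and_map_eq_self_iff (σ : F →+* F) {s ε x y : F} (h2 : (2 : F) ≠ 0)
    (hs : s ≠ 0) (hε : ε ^ 2 = 1) (hσs : σ s = ε * s) (hxy : (x + s * y) * (x - s * y) = 1) :
    σ x = x ∧ σ y = y ↔ σ (x + s * y) = x + ε * s * y := by
  have hσ_add : σ (x + s * y) = σ x + ε * s * σ y := by rw [map_add, map_mul, hσs]
  have hσ_sub : σ (x - s * y) = σ x - ε * s * σ y := by rw [map_sub, map_mul, hσs]
  refine ⟨fun ⟨hx, hy⟩ ↦ by rw [hσ_add, hx, hy], fun h ↦ ?_⟩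
  have hinv : (x + ε * s * y) * (x - ε * s * y) = 1 := by
    linear_combination hxy - s ^ 2 * y ^ 2 * hε
  have hsub : σ (x - s * y) = x - ε * s * y := by
    have h1 := congrArg σ hxy
    rw [map_mul, map_one, h] at h1
    linear_combination (x - ε * s * y) * h1 - σ (x - s * y) * hinv
  have hεs : ε * s ≠ 0 := mul_ne_zero (by rintro rfl; norm_num at hε) hs
  constructor
  · exact mul_left_cancel₀ h2 (by linear_combination h + hsub - hσ_add - hσ_sub)
  · exact mul_left_cancel₀ (mul_ne_zero h2 hεs) (by linear_combination h - hsub - hσ_add + hσ_sub)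

lemma val_zpow_neg_one_pow {s x y : F} (u : Fˣ) (hu : (u : F) = x + s * y)
    (hu' : ((u⁻¹ : Fˣ) : F) = x - s * y) (m : ℕ) :
    ((u ^ ((-1 : ℤ) ^ m) : Fˣ) : F) = x + (-1) ^ m * s * y := by
  rcases m.even_or_odd with hm | hm
  · rw [hm.neg_one_pow, hm.neg_one_pow, zpow_one, hu, one_mul]
  · rw [hm.neg_one_pow, hm.neg_one_pow, zpow_neg_one, hu']
    ring

end Torus

lemma zpow_pow_eq_zpow_neg_one_pow_iff {G : Type*} [Group G] (g : G) (c : ℤ) (m : ℕ) :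
    g ^ (c ^ m) = g ^ ((-1 : ℤ) ^ m) ↔ (orderOf g : ℤ) ∣ (-c) ^ m - 1 := by
  have hsq : ((-1 : ℤ) ^ m) ^ 2 = 1 := by rw [← pow_mul, pow_mul']; simp
  have hrw : (-c) ^ m - 1 = -(-1) ^ m * ((-1) ^ m - c ^ m) := by
    rw [neg_pow]
    linear_combination hsq
  rw [zpow_eq_zpow_iff_modEq, Int.modEq_iff_dvd, hrw,
    IsUnit.dvd_mul_left (isUnit_neg_one.pow m).neg]

lemma orderOf_eq_mul_orderOf_pow {G : Type*} [Monoid G] {x : G} {n : ℕ} (hn : n ≠ 0)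
    (h : n ∣ orderOf (x ^ n)) : orderOf x = n * orderOf (x ^ n) := by
  have hnx : n ∣ orderOf x := h.trans (orderOf_pow_dvd n)
  rw [orderOf_pow_of_dvd hn hnx, Nat.mul_div_cancel' hnx]

lemma mul_dvd_one_sub_pow_sub_one_iff {n Q : ℤ} (hQ : Q ≠ 0) (hn : n ∣ Q) (m : ℕ) :
    n * Q ∣ (1 - Q) ^ m - 1 ↔ n ∣ m := by
  obtain ⟨c, hc⟩ := sq_dvd_add_pow_sub_sub (-Q) 1 m
  have hrw : (1 - Q) ^ m - 1 = -(m * Q) + Q ^ 2 * c := by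
    simp only [one_pow] at hc
    linear_combination hc
  rw [hrw, dvd_add_left (dvd_mul_of_dvd_left (by rw [sq]; exact mul_dvd_mul_right hn Q) c),
    dvd_neg, mul_dvd_mul_iff_right hQ]

section FiniteField

open FiniteField

variable {K : Type*} [Field K] [Fintype K]

lemma frobeniusAlgHom_pow_apply (R : Type*) [CommRing R] [Algebra K R] (m : ℕ) (x : R) :
    (frobeniusAlgHom K R ^ m) x = x ^ Fintype.card K ^ m := by
  rw [AlgHom.coe_pow, coe_frobeniusAlgHom, pow_iterate]

lemma finrank_dvd_iff_forall_pow_eq_self (L : Type*) [Field L] [Algebra K L] [Finite L]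
    (m : ℕ) : Module.finrank K L ∣ m ↔ ∀ x : L, x ^ Fintype.card K ^ m = x := by
  rw [← orderOf_frobeniusAlgHom, orderOf_dvd_iff_pow_eq_one, AlgHom.ext_iff]
  simp [frobeniusAlgHom_pow_apply]

variable {Ω : Type*} [Field Ω] [Algebra K Ω]

lemma finrank_adjoin_dvd_iff [Algebra.IsAlgebraic K Ω] (S : Set Ω) [Finite S] (m : ℕ) :
    Module.finrank K (Algebra.adjoin K S) ∣ m ↔ ∀ x ∈ S, x ^ Fintype.card K ^ m = x := by
  set E := IntermediateField.adjoin K S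
  have hE : E.toSubalgebra = Algebra.adjoin K S :=
    IntermediateField.adjoin_toSubalgebra_of_isAlgebraic fun x _ ↦
      Algebra.IsAlgebraic.isAlgebraic x
  have : FiniteDimensional K E :=
    IntermediateField.finiteDimensional_adjoin fun x _ ↦ Algebra.IsIntegral.isIntegral x
  have : Finite E := Module.finite_of_finite K
  rw [← hE, IntermediateField.finrank_eq_finrank_subalgebra, finrank_dvd_iff_forall_pow_eq_self]
  have := AlgHom.eqOn_adjoin_iff (φ := frobeniusAlgHom K Ω ^ m) (ψ := AlgHom.id K Ω) (s := S)
  rw [← hE] at this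
  simpa [Set.EqOn, Subtype.ext_iff, frobeniusAlgHom_pow_apply] using this

lemma mem_range_algebraMap_of_pow_card_eq_self [Algebra.IsAlgebraic K Ω] {t : Ω}
    (ht : t ^ Fintype.card K = t) : t ∈ Set.range (algebraMap K Ω) := by
  have h := (finrank_adjoin_dvd_iff {t} 1).2 (by simpa using ht)
  rw [Nat.dvd_one, Subalgebra.finrank_eq_one_iff] at h
  rw [← Algebra.mem_bot, ← h]
  exact Algebra.subset_adjoin rfl

lemma pow_card_eq_neg_of_sq_eq_algebraMap {R : Type*} [CommRing R] [Algebra K R]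
    (hchar : ringChar K ≠ 2) {α : K} (hα : ¬ IsSquare α) {s : R} (hs : s ^ 2 = algebraMap K R α) :
    s ^ Fintype.card K = -s := by
  have hα0 : α ≠ 0 := by
    rintro rfl
    exact hα IsSquare.zero
  have hEuler : α ^ (Fintype.card K / 2) = -1 :=
    (pow_dichotomy hchar hα0).resolve_left fun h ↦ hα ((isSquare_iff hchar hα0).2 h)
  have hq : Fintype.card K = 2 * (Fintype.card K / 2) + 1 := by
    have := odd_card_of_char_ne_two hchar
    omega
  rw [hq, pow_succ, pow_mul, hs, ← map_pow, hEuler]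
  simp

lemma exists_sq_eq_algebraMap_of_not_isSquare [IsAlgClosed Ω] (hchar : ringChar K ≠ 2) {α : K}
    (hα : ¬ IsSquare α) :
    ∃ s : Ω, s ^ 2 = algebraMap K Ω α ∧ s ≠ 0 ∧ s ^ Fintype.card K = -s := by
  obtain ⟨s, hs⟩ := IsAlgClosed.exists_pow_nat_eq (algebraMap K Ω α) two_pos
  refine ⟨s, hs, ?_, pow_card_eq_neg_of_sq_eq_algebraMap hchar hα hs⟩
  rintro rfl
  exact hα ⟨0, (algebraMap K Ω).injective (by simp [← hs])⟩

lemma frobeniusAlgHom_pow_apply_of_pow_card_eq_neg {R : Type*} [CommRing R] [Algebra K R] {s : R}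
    (hs : s ^ Fintype.card K = -s) (m : ℕ) : (frobeniusAlgHom K R ^ m) s = (-1) ^ m * s := by
  induction m with
  | zero => simp
  | succ m ih =>
    rw [pow_succ', AlgHom.mul_apply, ih, map_mul, map_pow, map_neg, map_one, frobeniusAlgHom_apply,
      hs]
    ring

lemma pow_eq_self_and_pow_eq_self_iff_orderOf_dvd (h2 : (2 : Ω) ≠ 0) {s : Ω} (hs0 : s ≠ 0)
    (hsq : s ^ Fintype.card K = -s) {x y : Ω} (u : Ωˣ) (hu : (u : Ω) = x + s * y)
    (hu' : ((u⁻¹ : Ωˣ) : Ω) = x - s * y) (m : ℕ) :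
    x ^ Fintype.card K ^ m = x ∧ y ^ Fintype.card K ^ m = y ↔
      (orderOf u : ℤ) ∣ (-(Fintype.card K : ℤ)) ^ m - 1 := by
  have hxy : (x + s * y) * (x - s * y) = 1 := by rw [← hu, ← hu', Units.mul_inv]
  have hε : ((-1 : Ω) ^ m) ^ 2 = 1 := by rw [← pow_mul, pow_mul']; simp
  have key := map_eq_self_and_map_eq_self_iff (frobeniusAlgHom K Ω ^ m : Ω →ₐ[K] Ω).toRingHom
    h2 hs0 hε (frobeniusAlgHom_pow_apply_of_pow_card_eq_neg hsq m) hxy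
  simp only [AlgHom.toRingHom_eq_coe, RingHom.coe_coe, frobeniusAlgHom_pow_apply] at key
  rw [key, ← hu, ← val_zpow_neg_one_pow u hu hu' m, ← zpow_pow_eq_zpow_neg_one_pow_iff,
    ← Units.val_pow_eq_pow_val, Units.val_inj]
  norm_cast

lemma pow_card_eq_self_and_pow_card_eq_self_iff_orderOf_dvd (h2 : (2 : Ω) ≠ 0) {s : Ω}
    (hs0 : s ≠ 0) (hsq : s ^ Fintype.card K = -s) {x y : Ω} (u : Ωˣ) (hu : (u : Ω) = x + s * y)
    (hu' : ((u⁻¹ : Ωˣ) : Ω) = x - s * y) :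
    x ^ Fintype.card K = x ∧ y ^ Fintype.card K = y ↔ orderOf u ∣ Fintype.card K + 1 := by
  have h := pow_eq_self_and_pow_eq_self_iff_orderOf_dvd h2 hs0 hsq u hu hu' 1
  simp only [pow_one] at h
  rw [h, show -(Fintype.card K : ℤ) - 1 = -((Fintype.card K + 1 : ℕ) : ℤ) by push_cast; ring,
    dvd_neg, Int.natCast_dvd_natCast]

end FiniteField

section LucasTorus

variable {K Ω : Type*} [Field K] [Fintype K] [Field Ω] [Algebra K Ω] {α : K} {a : K × K} {s : Ω}

lemma exists_eq_pow_of_pow_card_add_one_eq_one [Algebra.IsAlgebraic K Ω]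
    (hgen : ∀ P : K × K, P.1 ^ 2 - α * P.2 ^ 2 = 1 → ∃ k : ℕ, P = tpow α k a)
    (h2 : (2 : Ω) ≠ 0) (hs : s ^ 2 = algebraMap K Ω α) (hs0 : s ≠ 0)
    (hsq : s ^ Fintype.card K = -s) {v : Ωˣ}
    (hv : (v : Ω) = algebraMap K Ω a.1 + s * algebraMap K Ω a.2) {u : Ωˣ}
    (hu : u ^ (Fintype.card K + 1) = 1) : ∃ k : ℕ, u = v ^ k := by
  obtain ⟨x, y, hux, hux'⟩ := exists_val_eq_add_mul h2 hs0 u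
  obtain ⟨hx, hy⟩ := (pow_card_eq_self_and_pow_card_eq_self_iff_orderOf_dvd h2 hs0 hsq u hux
    hux').2 (orderOf_dvd_of_pow_eq_one hu)
  obtain ⟨x₀, rfl⟩ := mem_range_algebraMap_of_pow_card_eq_self hx
  obtain ⟨y₀, rfl⟩ := mem_range_algebraMap_of_pow_card_eq_self hy
  have hxy₀ : x₀ ^ 2 - α * y₀ ^ 2 = 1 := by
    apply (algebraMap K Ω).injective
    have := u.mul_inv
    rw [hux, hux'] at this
    simp only [map_sub, map_mul, map_pow, map_one, ← hs]
    linear_combination this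
  obtain ⟨k, hk⟩ := hgen (x₀, y₀) hxy₀
  refine ⟨k, Units.ext ?_⟩
  rw [Units.val_pow_eq_pow_val, hv,
    ← tpow_fst_add_mul_snd hs k (algebraMap K Ω a.1, algebraMap K Ω a.2), map_tpow, ← hk, hux]

lemma orderOf_eq_card_add_one [IsAlgClosed Ω] [Algebra.IsAlgebraic K Ω]
    (hgen : ∀ P : K × K, P.1 ^ 2 - α * P.2 ^ 2 = 1 → ∃ k : ℕ, P = tpow α k a)
    (h2 : (2 : Ω) ≠ 0) (hs : s ^ 2 = algebraMap K Ω α) (hs0 : s ≠ 0)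
    (hsq : s ^ Fintype.card K = -s) {v : Ωˣ}
    (hv : (v : Ω) = algebraMap K Ω a.1 + s * algebraMap K Ω a.2)
    (hv' : ((v⁻¹ : Ωˣ) : Ω) = algebraMap K Ω a.1 - s * algebraMap K Ω a.2) :
    orderOf v = Fintype.card K + 1 := by
  have hdvd : orderOf v ∣ Fintype.card K + 1 :=
    (pow_card_eq_self_and_pow_card_eq_self_iff_orderOf_dvd h2 hs0 hsq v hv hv').1
      ⟨by rw [← map_pow, FiniteField.pow_card], by rw [← map_pow, FiniteField.pow_card]⟩
  have : NeZero ((Fintype.card K + 1 : ℕ) : Ω) := ⟨by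
    rw [← map_natCast (algebraMap K Ω), Nat.cast_succ, FiniteField.cast_card_eq_zero]
    simp⟩
  obtain ⟨ζ, hζ⟩ := HasEnoughRootsOfUnity.exists_primitiveRoot Ω (Fintype.card K + 1)
  set ζ' := (hζ.isUnit (Nat.succ_ne_zero _)).unit
  have hζ' : orderOf ζ' = Fintype.card K + 1 := by
    rw [← orderOf_units, IsUnit.unit_spec, ← hζ.eq_orderOf]
  obtain ⟨k, hk⟩ := exists_eq_pow_of_pow_card_add_one_eq_one hgen h2 hs hs0 hsq hv
    (hζ' ▸ pow_orderOf_eq_one ζ')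
  exact Nat.dvd_antisymm hdvd (hζ' ▸ hk ▸ orderOf_pow_dvd k)

end LucasTorus

theorem stmt_11_general (K : Type*) [Field K] [Fintype K] (hchar : ringChar K ≠ 2)
    (α : K) (hα : ¬ IsSquare α)
    (n : ℕ)
    (hdvd : n ∣ Fintype.card K + 1)
    (a : K × K)
    (hgen : ∀ P : K × K, P.1 ^ 2 - α * P.2 ^ 2 = 1 → ∃ k : ℕ, P = tpow α k a)
    (Ω : Type*) [Field Ω] [Algebra K Ω] [IsAlgClosure K Ω]
    (b : Ω × Ω) (hb : b.1 ^ 2 - algebraMap K Ω α * b.2 ^ 2 = 1)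
    (hnb : tpow (algebraMap K Ω α) n b = (algebraMap K Ω a.1, algebraMap K Ω a.2)) :
    Module.finrank K (Algebra.adjoin K {b.1, b.2} : Subalgebra K Ω) = n := by
  have : IsAlgClosed Ω := IsAlgClosure.isAlgClosed K
  have : Algebra.IsAlgebraic K Ω := IsAlgClosure.isAlgebraic
  obtain ⟨s, hs, hs0, hsq⟩ := exists_sq_eq_algebraMap_of_not_isSquare (Ω := Ω) hchar hα
  have h2 : (2 : Ω) ≠ 0 := by
    rw [← map_ofNat (algebraMap K Ω) 2]
    exact (map_ne_zero _).2 (Ring.two_ne_zero hchar)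
  let u : Ωˣ := ⟨b.1 + s * b.2, b.1 - s * b.2, by linear_combination hb - b.2 ^ 2 * hs,
    by linear_combination hb - b.2 ^ 2 * hs⟩
  obtain ⟨hun, hun'⟩ := val_pow_eq_tpow hs u rfl rfl n
  rw [hnb] at hun hun'
  have hn0 : n ≠ 0 := (Nat.pos_of_dvd_of_pos hdvd (Nat.succ_pos _)).ne'
  have hv := orderOf_eq_card_add_one hgen h2 hs hs0 hsq hun hun'
  have hu : orderOf u = n * (Fintype.card K + 1) :=
    hv ▸ orderOf_eq_mul_orderOf_pow hn0 (hv ▸ hdvd)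
  refine Nat.dvd_right_iff_eq.mp fun m ↦ ?_
  simp only [finrank_adjoin_dvd_iff, Set.mem_insert_iff, Set.mem_singleton_iff, forall_eq_or_imp,
    forall_eq]
  rw [pow_eq_self_and_pow_eq_self_iff_orderOf_dvd h2 hs0 hsq u rfl rfl, hu, Nat.cast_mul,
    show -(Fintype.card K : ℤ) = 1 - ((Fintype.card K + 1 : ℕ) : ℤ) by push_cast; ring,
    mul_dvd_one_sub_pow_sub_one_iff (by positivity) (Int.natCast_dvd_natCast.2 hdvd),
    Int.natCast_dvd_natCast]

/-- If `a` generates the cyclic group `T_α(F_q)` of order `q + 1`, `n` is a nontrivial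
divisor of `q + 1`, and `b` is a point of the Lucas torus over an algebraic closure of
`F_q` with `[n]b = a`, then the field generated over `F_q` by the coordinates of `b` is
the degree-`n` extension `F_{q^n}`. -/
theorem stmt_11 (K : Type*) [Field K] [Fintype K] (hchar : ringChar K ≠ 2)
    (α : K) (hα : ¬ IsSquare α)
    (n : ℕ) (hn1 : 1 < n) (hn2 : n < Fintype.card K + 1)
    (hdvd : n ∣ Fintype.card K + 1)
    (a : K × K) (ha : a.1 ^ 2 - α * a.2 ^ 2 = 1)
    (hgen : ∀ P : K × K, P.1 ^ 2 - α * P.2 ^ 2 = 1 → ∃ k : ℕ, P = tpow α k a)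
    (Ω : Type*) [Field Ω] [Algebra K Ω] [IsAlgClosure K Ω]
    (b : Ω × Ω) (hb : b.1 ^ 2 - algebraMap K Ω α * b.2 ^ 2 = 1)
    (hnb : tpow (algebraMap K Ω α) n b = (algebraMap K Ω a.1, algebraMap K Ω a.2)) :
    Module.finrank K (Algebra.adjoin K {b.1, b.2} : Subalgebra K Ω) = n :=
  stmt_11_general K hchar α hα n hdvd a hgen Ω b hb hnb
end
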